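/- arXiv:1902.09180 — 8 statements merged into one kernel-verified Lean document; each statement's English description precedes it below -/
import Mathlib

section
/- Let 𝔪 = Σ_{i∈I} Δ_i be a finite multisegment with depth function 𝔡, and let i₁, i₂ ∈ I with 𝔡(i₁) = 𝔡(i₂) and Δ_{i₂} ⊆ Δ_{i₁}. Then for any i ∈ I with Δ_{i₂} ⊆ Δ_i ⊆ Δ_{i₁} and 𝔡(i) > 𝔡(i₁), there exists j ∈ I with Δ_{i₂} ⊆ Δ_j ⊆ Δ_{i₁}, 𝔡(j) = 𝔡(i₁), and Δ_i ≪ Δ_j. -/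
/-- A segment `[a,b]` of integers with `a ≤ b`. -/
structure Segment where
  a : ℤ
  b : ℤ
  hle : a ≤ b

namespace Segment

/-- `s ≪ t` iff both the begin and end points of `s` are strictly smaller. -/
def ll (s t : Segment) : Prop := s.a < t.a ∧ s.b < t.b

/-- Containment of segments: `s ⊆ t`. -/
def sub (s t : Segment) : Prop := t.a ≤ s.a ∧ s.b ≤ t.b

/-- Strict containment of segments: `s ⊊ t`. -/
def ssub (s t : Segment) : Prop := sub s t ∧ s ≠ t

end Segment

/-- There is a `≪`-ascending chain of length `j` in the family `Δ` starting at index `i`. -/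
def ChainFrom {I : Type*} (Δ : I → Segment) (i : I) (j : ℕ) : Prop :=
  ∃ f : Fin (j + 1) → I, f 0 = i ∧
    ∀ r : Fin j, Segment.ll (Δ (f r.castSucc)) (Δ (f r.succ))

/-- `d` is the depth function of the multisegment `Δ`: `d i` is the maximal length of a
`≪`-ascending chain starting at `Δ i`. -/
def IsDepth {I : Type*} (Δ : I → Segment) (d : I → ℕ) : Prop :=
  ∀ i, IsGreatest {j | ChainFrom Δ i j} (d i)

/-!
Induction on `d i - d i₁`. If `d i = m + 1`, the second term of a longest chain from `Δ i` is a
segment `Δ j` with `Δ i ≪ Δ j` and `d j = m`. Such a `Δ j` stays between `Δ i₂` and `Δ i₁` as long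
as `d j ≥ d i₁ = d i₂`: its ends lie strictly to the right of those of `Δ i`, so leaving the interval
would force `Δ i₂ ≪ Δ j` or `Δ i₁ ≪ Δ j`, and hence `d j < d i₂` or `d j < d i₁`.
-/

lemma Segment.ll_trans {s t u : Segment} (hst : s.ll t) (htu : t.ll u) : s.ll u :=
  ⟨hst.1.trans htu.1, hst.2.trans htu.2⟩

namespace ChainFrom

variable {I : Type*} {Δ : I → Segment} {i j : I} {m : ℕ}

lemma cons (h : (Δ i).ll (Δ j)) (hc : ChainFrom Δ j m) : ChainFrom Δ i (m + 1) := by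
  obtain ⟨g, hg0, hg⟩ := hc
  refine ⟨Fin.cases i g, Fin.cases_zero, fun r => ?_⟩
  induction r using Fin.cases with
  | zero => simpa only [Fin.castSucc_zero, Fin.cases_zero, Fin.cases_succ, hg0] using h
  | succ s =>
    rw [← Fin.succ_castSucc]
    simpa only [Fin.cases_succ] using hg s

lemma tail (hc : ChainFrom Δ i (m + 1)) : ∃ j, (Δ i).ll (Δ j) ∧ ChainFrom Δ j m := by
  obtain ⟨f, hf0, hf⟩ := hc
  refine ⟨f 1, ?_, fun k => f k.succ, rfl, fun r => ?_⟩
  · simpa only [Fin.castSucc_zero, hf0, Fin.succ_zero_eq_one] using hf 0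
  · simpa only [← Fin.succ_castSucc] using hf r.succ

end ChainFrom

namespace IsDepth

variable {I : Type*} {Δ : I → Segment} {d : I → ℕ} {i j k : I} {m : ℕ}

lemma lt_of_ll (hd : IsDepth Δ d) (h : (Δ i).ll (Δ j)) : d j < d i :=
  (hd i).2 ((hd j).1.cons h)

lemma exists_ll_of_eq_succ (hd : IsDepth Δ d) (hi : d i = m + 1) :
    ∃ j, (Δ i).ll (Δ j) ∧ d j = m := by
  obtain ⟨j, hll, hc⟩ := ChainFrom.tail (hi ▸ (hd i).1)
  have hle : m ≤ d j := (hd j).2 hc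
  have hlt : d j < d i := hd.lt_of_ll hll
  exact ⟨j, hll, by omega⟩

lemma sub_of_sub_of_ll (hd : IsDepth Δ d) (hki : (Δ k).sub (Δ i)) (hij : (Δ i).ll (Δ j))
    (hdk : d k ≤ d j) : (Δ k).sub (Δ j) := by
  have hb : (Δ k).b < (Δ j).b := hki.2.trans_lt hij.2
  refine ⟨not_lt.1 fun ha => ?_, hb.le⟩
  have := hd.lt_of_ll ⟨ha, hb⟩
  omega

lemma sub_of_ll_of_sub (hd : IsDepth Δ d) (hik : (Δ i).sub (Δ k)) (hij : (Δ i).ll (Δ j))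
    (hdk : d k ≤ d j) : (Δ j).sub (Δ k) := by
  have ha : (Δ k).a < (Δ j).a := hik.1.trans_lt hij.1
  refine ⟨ha.le, not_lt.1 fun hb => ?_⟩
  have := hd.lt_of_ll ⟨ha, hb⟩
  omega

lemma exists_ll_between (hd : IsDepth Δ d) {i₁ i₂ : I} (h12 : d i₁ = d i₂)
    (h2i : (Δ i₂).sub (Δ i)) (hi1 : (Δ i).sub (Δ i₁)) (hdi : d i = m + 1) (hm : d i₁ ≤ m) :
    ∃ j, (Δ i₂).sub (Δ j) ∧ (Δ j).sub (Δ i₁) ∧ d j = m ∧ (Δ i).ll (Δ j) := by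
  obtain ⟨j, hij, hdj⟩ := hd.exists_ll_of_eq_succ hdi
  exact ⟨j, hd.sub_of_sub_of_ll h2i hij (by omega), hd.sub_of_ll_of_sub hi1 hij (by omega),
    hdj, hij⟩

lemma exists_between_of_eq_add (hd : IsDepth Δ d) {i₁ i₂ : I} (h12 : d i₁ = d i₂) (n : ℕ) :
    ∀ i, (Δ i₂).sub (Δ i) → (Δ i).sub (Δ i₁) → d i = d i₁ + n + 1 →
      ∃ j, (Δ i₂).sub (Δ j) ∧ (Δ j).sub (Δ i₁) ∧ d j = d i₁ ∧ (Δ i).ll (Δ j) := by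
  induction n with
  | zero => exact fun i h2i hi1 hdi => hd.exists_ll_between h12 h2i hi1 hdi le_rfl
  | succ n ih =>
    intro i h2i hi1 hdi
    obtain ⟨j, h2j, hj1, hdj, hij⟩ := hd.exists_ll_between h12 h2i hi1 hdi (by omega)
    obtain ⟨j', h2j', hj'1, hdj', hjj'⟩ := ih j h2j hj1 hdj
    exact ⟨j', h2j', hj'1, hdj', Segment.ll_trans hij hjj'⟩

end IsDepth

theorem exists_between_depth_general {I : Type*} (Δ : I → Segment) (d : I → ℕ)
    (hd : IsDepth Δ d) (i₁ i₂ : I) (h12 : d i₁ = d i₂)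
    (i : I)
    (h2i : Segment.sub (Δ i₂) (Δ i)) (hi1 : Segment.sub (Δ i) (Δ i₁))
    (hgt : d i > d i₁) :
    ∃ j, Segment.sub (Δ i₂) (Δ j) ∧ Segment.sub (Δ j) (Δ i₁) ∧
      d j = d i₁ ∧ Segment.ll (Δ i) (Δ j) :=
  hd.exists_between_of_eq_add h12 (d i - d i₁ - 1) i h2i hi1 (by omega)

/-- Lemma (ib 2): if `d i₁ = d i₂`, `Δ i₂ ⊆ Δ i₁`, and `i` satisfies
`Δ i₂ ⊆ Δ i ⊆ Δ i₁` and `d i > d i₁`, then there is `j` with `Δ i₂ ⊆ Δ j ⊆ Δ i₁`,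
`d j = d i₁` and `Δ i ≪ Δ j`. -/
theorem exists_between_depth {I : Type*} [Fintype I] (Δ : I → Segment) (d : I → ℕ)
    (hd : IsDepth Δ d) (i₁ i₂ : I) (h12 : d i₁ = d i₂)
    (hsub : Segment.sub (Δ i₂) (Δ i₁)) (i : I)
    (h2i : Segment.sub (Δ i₂) (Δ i)) (hi1 : Segment.sub (Δ i) (Δ i₁))
    (hgt : d i > d i₁) :
    ∃ j, Segment.sub (Δ i₂) (Δ j) ∧ Segment.sub (Δ j) (Δ i₁) ∧
      d j = d i₁ ∧ Segment.ll (Δ i) (Δ j) :=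
  exists_between_depth_general Δ d hd i₁ i₂ h12 i h2i hi1 hgt
end

section
/- Let 𝔪 = Σ_{i∈I} Δ_i be a multisegment and σ the permutation of I arising in the Knuth-step construction (defined by admissible enumerations of the fibers of the depth function 𝔡). Suppose i, i' ∈ I satisfy Δ_{σ(i)} ⊊ Δ_{i'} ⊊ Δ_i. Then 𝔡(i') < 𝔡(i). -/
/-- The data of one step of the Knuth (RSK row-extraction) algorithm on a multisegment
`Δ : I → Segment`: the depth function `d`, admissible enumerations `L k` of the depth fibers
(containment-decreasing lists), the permutation `σ` cycling each fiber, and the segments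
`Δ' i = [b(Δ i), e(Δ (σ i))]`. -/
structure KnuthData (I : Type*) where
  Δ : I → Segment
  d : I → ℕ
  σ : Equiv.Perm I
  L : ℕ → List I
  Δ' : I → Segment
  hd : IsDepth Δ d
  hnodup : ∀ k, (L k).Nodup
  hmem : ∀ k i, i ∈ L k ↔ d i = k
  hchain : ∀ k, (L k).Chain' fun p q => Segment.sub (Δ q) (Δ p)
  hσ : ∀ (k : ℕ) (n : ℕ) (hn : n < (L k).length),
    σ ((L k).get ⟨n, hn⟩) =
      (L k).get ⟨(n + 1) % (L k).length,
        Nat.mod_lt _ (Nat.lt_of_le_of_lt (Nat.zero_le n) hn)⟩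
  hΔ'a : ∀ i, (Δ' i).a = (Δ i).a
  hΔ'b : ∀ i, (Δ' i).b = (Δ (σ i)).b

namespace Segment

theorem ext' {s t : Segment} (ha : s.a = t.a) (hb : s.b = t.b) : s = t := by
  cases s; cases t; simp_all

theorem sub_refl (s : Segment) : sub s s := ⟨le_refl _, le_refl _⟩

theorem sub_antisymm {s t : Segment} (h1 : sub s t) (h2 : sub t s) : s = t :=
  ext' (le_antisymm h2.1 h1.1) (le_antisymm h1.2 h2.2)

theorem sub_trans {s t u : Segment} (h1 : sub s t) (h2 : sub t u) : sub s u :=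
  ⟨h2.1.trans h1.1, h1.2.trans h2.2⟩

end Segment

theorem chainFrom_cons {I : Type*} (Δ : I → Segment) {i j : I} {m : ℕ}
    (hll : Segment.ll (Δ i) (Δ j)) (h : ChainFrom Δ j m) : ChainFrom Δ i (m + 1) := by
  obtain ⟨f, hf0, hf⟩ := h
  refine ⟨Fin.cons i f, rfl, fun r => ?_⟩
  induction r using Fin.cases with
  | zero => simpa [hf0] using hll
  | succ s =>
      have h1 : (Fin.succ s).castSucc = (Fin.castSucc s).succ := rfl
      simp only [h1, Fin.cons_succ]
      exact hf s

theorem chainFrom_tail {I : Type*} (Δ : I → Segment) {i : I} {m : ℕ}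
    (h : ChainFrom Δ i (m + 1)) : ∃ j, Segment.ll (Δ i) (Δ j) ∧ ChainFrom Δ j m := by
  obtain ⟨f, hf0, hf⟩ := h
  refine ⟨f (Fin.succ 0), ?_, f ∘ Fin.succ, rfl, fun r => ?_⟩
  · have := hf 0
    simpa [hf0] using this
  · have h1 : (Fin.succ r).castSucc = (Fin.castSucc r).succ := rfl
    have := hf r.succ
    simpa [h1] using this

theorem depth_step {I : Type*} {Δ : I → Segment} {d : I → ℕ} (hd : IsDepth Δ d) {i : I} {m : ℕ}
    (h : d i = m + 1) : ∃ j, Segment.ll (Δ i) (Δ j) ∧ d j = m := by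
  have hc := (hd i).1
  rw [h] at hc
  obtain ⟨j, hll, hcj⟩ := chainFrom_tail Δ hc
  refine ⟨j, hll, le_antisymm ?_ ((hd j).2 hcj)⟩
  have := (hd i).2 (chainFrom_cons Δ hll (hd j).1)
  omega

theorem depth_descend {I : Type*} {Δ : I → Segment} {d : I → ℕ} (hd : IsDepth Δ d) {k : ℕ} :
    ∀ (m : ℕ) (i : I), d i = k + m + 1 →
      ∃ j, d j = k ∧ (Δ i).a < (Δ j).a ∧ (Δ i).b < (Δ j).b := by
  intro m
  induction m with
  | zero =>
      intro i hi
      obtain ⟨j, hll, hj⟩ := depth_step hd hi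
      exact ⟨j, hj, hll.1, hll.2⟩
  | succ m ih =>
      intro i hi
      obtain ⟨j1, hll, hj1⟩ := depth_step hd (show d i = (k + m + 1) + 1 by omega)
      obtain ⟨j, hj, ha, hb⟩ := ih j1 hj1
      exact ⟨j, hj, hll.1.trans ha, hll.2.trans hb⟩

/-- `i` belongs to the ladder index set `Î`: it is the last index of the admissible enumeration
of its depth fiber.  The highest ladder `𝔩(𝔪)` consists of the segments `Δ' i`, `i ∈ Î`, and the
derived multisegment `𝔪'` of the segments `Δ' i`, `i ∉ Î`. -/

def IhatP {I : Type*} (K : KnuthData I) (i : I) : Prop :=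
  (K.L (K.d i)).getLast? = some i

/-- If `Δ (σ i) ⊊ Δ i' ⊊ Δ i`, where `σ` is the permutation of the Knuth step, then
`d i' < d i`. -/
theorem depth_lt_of_between_sigma {I : Type*} [Fintype I] (K : KnuthData I) (i i' : I)
    (h1 : Segment.ssub (K.Δ (K.σ i)) (K.Δ i'))
    (h2 : Segment.ssub (K.Δ i') (K.Δ i)) :
    K.d i' < K.d i := by
  by_contra hlt
  push_neg at hlt
  set k := K.d i with hk
  have hiL : i ∈ K.L k := (K.hmem k i).2 rfl
  obtain ⟨⟨n, hn⟩, hni⟩ := List.mem_iff_get.mp hiL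
  have hpw : ∀ (p q : Fin (K.L k).length), p < q →
      Segment.sub (K.Δ ((K.L k).get q)) (K.Δ ((K.L k).get p)) := by
    haveI : IsTrans I (fun p q => Segment.sub (K.Δ q) (K.Δ p)) :=
      ⟨fun _ _ _ hab hbc => Segment.sub_trans hbc hab⟩
    have hp := List.isChain_iff_pairwise.mp (K.hchain k)
    exact fun p q h => List.pairwise_iff_get.mp hp p q h
  have hσi := K.hσ k n hn
  rw [hni] at hσi
  by_cases hc : n + 1 < (K.L k).length
  · -- σ i is at position n + 1
    have hmod : (n + 1) % (K.L k).length = n + 1 := Nat.mod_eq_of_lt hc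
    have hσi' : K.σ i = (K.L k).get ⟨n + 1, hc⟩ := by
      rw [hσi]; congr 1; exact Fin.ext hmod
    have key : ∀ j, K.d j = k → ¬ Segment.sub (K.Δ i) (K.Δ j) →
        ¬ Segment.sub (K.Δ j) (K.Δ (K.σ i)) → False := by
      intro j hj hnij hnjs
      have hjL : j ∈ K.L k := (K.hmem k j).2 hj
      obtain ⟨⟨m, hm⟩, hmj⟩ := List.mem_iff_get.mp hjL
      rcases lt_trichotomy m n with h | h | h
      · exact hnij (by rw [← hni, ← hmj]; exact hpw ⟨m, hm⟩ ⟨n, hn⟩ h)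
      · refine hnij ?_
        have : j = i := by rw [← hni, ← hmj]; congr 1; exact Fin.ext h
        rw [this]; exact Segment.sub_refl _
      · rcases eq_or_lt_of_le (Nat.succ_le_of_lt h) with h' | h'
        · refine hnjs ?_
          have : j = K.σ i := by rw [hσi', ← hmj]; congr 1; exact Fin.ext h'.symm
          rw [this]; exact Segment.sub_refl _
        · refine hnjs ?_
          rw [hσi', ← hmj]
          exact hpw ⟨n + 1, hc⟩ ⟨m, hm⟩ h'
    rcases eq_or_lt_of_le hlt with heq | hgt
    · refine key i' heq.symm (fun h => h2.2 (Segment.sub_antisymm h2.1 h))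
        (fun h => h1.2 (Segment.sub_antisymm h1.1 h))
    · obtain ⟨j, hj, ha, hb⟩ := depth_descend (k := k) K.hd (K.d i' - k - 1) i' (by omega)
      refine key j hj ?_ ?_
      · intro h
        have := h2.1.1
        have := h.1
        simp only [Segment.sub] at *
        omega
      · intro h
        have := h1.1.2
        have := h.2
        simp only [Segment.sub] at *
        omega
  · -- i is last; σ i is at position 0
    have hlen : n + 1 = (K.L k).length := by omega
    have hmod : (n + 1) % (K.L k).length = 0 := by rw [hlen, Nat.mod_self]
    have hσi' : K.σ i = (K.L k).get ⟨0, by omega⟩ := by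
      rw [hσi]; congr 1; exact Fin.ext hmod
    have hsub : Segment.sub (K.Δ i) (K.Δ (K.σ i)) := by
      rcases Nat.eq_zero_or_pos n with h0 | h0
      · have : K.σ i = i := by rw [hσi']; (conv_rhs => rw [← hni]); congr 1; exact Fin.ext h0.symm
        rw [this]; exact Segment.sub_refl _
      · rw [hσi']
        have := hpw ⟨0, by omega⟩ ⟨n, hn⟩ h0; rw [hni] at this; exact this
    exact h1.2 (Segment.sub_antisymm h1.1 (Segment.sub_trans h2.1 hsub))
end

section
/- Let 𝔪 be a nonzero multisegment with highest ladder 𝔩(𝔪) = Σ_{i∈Î} Δ'_i produced by the Knuth step. Then 𝔩(𝔪) is a ladder: its segments can be enumerated so that each is ≪-greater than the next; equivalently, for indices i, j ∈ Î with 𝔡(j) > 𝔡(i) one has Δ'_j ≪ Δ'_i. -/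
section Aux

variable {I : Type*}

lemma Segment.ll_trans_s6 {s t u : Segment} (h1 : Segment.ll s t) (h2 : Segment.ll t u) :
    Segment.ll s u := ⟨h1.1.trans h2.1, h1.2.trans h2.2⟩

lemma Segment.sub_refl_s6 (s : Segment) : Segment.sub s s := ⟨le_refl _, le_refl _⟩

lemma Segment.sub_trans_s6 {s t u : Segment} (h1 : Segment.sub s t) (h2 : Segment.sub t u) :
    Segment.sub s u := ⟨h2.1.trans h1.1, h1.2.trans h2.2⟩

lemma chain_tail {Δ : I → Segment} {j : I} {n : ℕ}
    (h : ChainFrom Δ j (n + 1)) :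
    ∃ i', Segment.ll (Δ j) (Δ i') ∧ ChainFrom Δ i' n := by
  obtain ⟨f, hf0, hf⟩ := h
  refine ⟨f 1, ?_, fun s : Fin (n + 1) => f s.succ, rfl, fun s => ?_⟩
  · have h0 := hf 0
    simpa [hf0] using h0
  · have key : (s.castSucc).succ = (s.succ).castSucc := by
      ext; simp
    have := hf s.succ
    rwa [← key] at this
  
lemma chain_cons {Δ : I → Segment} {j i' : I} {n : ℕ}
    (hll : Segment.ll (Δ j) (Δ i')) (h : ChainFrom Δ i' n) :
    ChainFrom Δ j (n + 1) := by
  obtain ⟨g, hg0, hg⟩ := h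
  refine ⟨Fin.cases j g, by simp, fun r => ?_⟩
  induction r using Fin.cases with
  | zero =>
      show Segment.ll (Δ (Fin.cases j g (Fin.castSucc 0))) (Δ (Fin.cases j g (Fin.succ 0)))
      rw [Fin.castSucc_zero, Fin.cases_zero, Fin.cases_succ, hg0]
      exact hll
  | succ s =>
      have key : (s.succ).castSucc = (s.castSucc).succ := by ext; simp
      have := hg s
      simpa [key, Fin.cases_succ] using this

lemma depth_pred {Δ : I → Segment} {d : I → ℕ} (hd : IsDepth Δ d) {j : I} {m : ℕ}
    (hj : d j = m + 1) : ∃ i', Segment.ll (Δ j) (Δ i') ∧ d i' = m := by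
  have hc : ChainFrom Δ j (m + 1) := hj ▸ (hd j).1
  obtain ⟨i', hll, htail⟩ := chain_tail hc
  refine ⟨i', hll, ?_⟩
  have hge : m ≤ d i' := (hd i').2 htail
  have hle : d i' ≤ m := by
    by_contra hlt
    push_neg at hlt
    have hchain : ChainFrom Δ j (d i' + 1) := chain_cons hll (hd i').1
    have := (hd j).2 hchain
    omega
  omega

lemma reach {Δ : I → Segment} {d : I → ℕ} (hd : IsDepth Δ d) :
    ∀ m, ∀ j, d j = m → ∀ k, k < m → ∃ i', Segment.ll (Δ j) (Δ i') ∧ d i' = k := by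
  intro m
  induction m with
  | zero => intro j _ k hk; omega
  | succ m ih =>
      intro j hj k hk
      obtain ⟨i'', hll, hdi⟩ := depth_pred hd hj
      rcases Nat.lt_succ_iff_lt_or_eq.mp hk with h | h
      · obtain ⟨i', hll', hdi'⟩ := ih i'' hdi k h
        exact ⟨i', Segment.ll_trans_s6 hll hll', hdi'⟩
      · exact ⟨i'', hll, h ▸ hdi⟩

lemma get_sub {Δ : I → Segment} {l : List I}
    (hc : l.Chain' fun p q => Segment.sub (Δ q) (Δ p)) :
    ∀ q (hq : q < l.length) (p) (hpq : p ≤ q),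
      Segment.sub (Δ (l.get ⟨q, hq⟩)) (Δ (l.get ⟨p, lt_of_le_of_lt hpq hq⟩)) := by
  intro q
  induction q with
  | zero =>
      intro hq p hpq
      have : p = 0 := Nat.le_zero.mp hpq
      subst this
      exact Segment.sub_refl_s6 _
  | succ q ih =>
      intro hq p hpq
      rcases Nat.le_succ_iff_eq_or_le.mp hpq with h | h
      · subst h; exact Segment.sub_refl_s6 _
      · have step := (List.isChain_iff_getElem.mp hc) q (by omega)
        exact Segment.sub_trans_s6 step (ih (by omega) p h)

lemma ihat_spec (K : KnuthData I) {i : I} (hi : IhatP K i) :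
    ∃ hlen : 0 < (K.L (K.d i)).length,
      (K.L (K.d i)).get ⟨(K.L (K.d i)).length - 1, by omega⟩ = i ∧
      K.σ i = (K.L (K.d i)).get ⟨0, hlen⟩ := by
  unfold IhatP at hi
  have hne : K.L (K.d i) ≠ [] := by
    intro hnil; rw [hnil] at hi; simp at hi
  have hlen : 0 < (K.L (K.d i)).length := List.length_pos_iff.mpr hne
  have hget : (K.L (K.d i)).get ⟨(K.L (K.d i)).length - 1, by omega⟩ = i := by
    rw [List.getLast?_eq_getElem?] at hi
    have h2 := List.getElem?_eq_getElem (l := K.L (K.d i))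
      (i := (K.L (K.d i)).length - 1) (by omega)
    rw [h2] at hi
    simpa [List.get_eq_getElem] using Option.some.inj hi
  refine ⟨hlen, hget, ?_⟩
  have hσ := K.hσ (K.d i) ((K.L (K.d i)).length - 1) (by omega)
  rw [hget] at hσ
  rw [hσ]
  simp only [List.get_eq_getElem]
  congr 1
  rw [Nat.sub_add_cancel hlen, Nat.mod_self]

end Aux

/-- The highest ladder `𝔩(𝔪)` of the Knuth step is a ladder: for `i, j ∈ Î` with
`d i < d j` one has `Δ' j ≪ Δ' i`. -/
theorem highest_ladder_is_ladder {I : Type*} [Fintype I] [Nonempty I] (K : KnuthData I)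
    (i j : I) (hi : IhatP K i) (hj : IhatP K j) (h : K.d i < K.d j) :
    Segment.ll (K.Δ' j) (K.Δ' i) := by
  classical
  obtain ⟨hleni, hgeti, hσi⟩ := ihat_spec K hi
  obtain ⟨hlenj, hgetj, hσj⟩ := ihat_spec K hj
  -- index of a fiber-k element in L k, and domination by last / head
  have mem_of_depth : ∀ x : I, K.d x = K.d i → x ∈ K.L (K.d i) := fun x hx => (K.hmem (K.d i) x).mpr hx
  have last_dom : ∀ x : I, K.d x = K.d i → Segment.sub (K.Δ i) (K.Δ x) := by
    intro x hx
    obtain ⟨⟨p, hp⟩, hpx⟩ := List.mem_iff_get.mp (mem_of_depth x hx)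
    have := get_sub (K.hchain (K.d i)) ((K.L (K.d i)).length - 1) (by omega) p (by omega)
    rw [hgeti, hpx] at this
    exact this
  have head_dom : ∀ x : I, K.d x = K.d i →
      Segment.sub (K.Δ x) (K.Δ (K.σ i)) := by
    intro x hx
    obtain ⟨⟨p, hp⟩, hpx⟩ := List.mem_iff_get.mp (mem_of_depth x hx)
    have := get_sub (K.hchain (K.d i)) p hp 0 (Nat.zero_le p)
    rw [hpx, ← hσi] at this
    exact this
  constructor
  · -- begin points
    obtain ⟨i', hll, hdi'⟩ := reach K.hd (K.d j) j rfl (K.d i) h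
    have h1 : (K.Δ i').a ≤ (K.Δ i).a := (last_dom i' hdi').1
    rw [K.hΔ'a, K.hΔ'a]
    exact lt_of_lt_of_le hll.1 h1
  · -- end points
    have hdσj : K.d (K.σ j) = K.d j := by
      rw [hσj]
      exact (K.hmem (K.d j) _).mp (List.get_mem _ _)
    obtain ⟨i'', hll, hdi''⟩ := reach K.hd (K.d j) (K.σ j) hdσj (K.d i) h
    have h1 : (K.Δ i'').b ≤ (K.Δ (K.σ i)).b := (head_dom i'' hdi'').2
    rw [K.hΔ'b, K.hΔ'b]
    exact lt_of_lt_of_le hll.2 h1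
end

section
/- Let 𝔪 = Σ_{i∈I} Δ_i be a non-degenerate multisegment with leading index set I* (from the Mœglin–Waldspurger algorithm) and define 𝔪† = Σ_{i∈I} Δ*_i where Δ*_i = ⁻Δ_i for i ∈ I* and Δ*_i = Δ_i otherwise. Then for every i ∈ I: 𝔡_𝔪(i) ≤ 𝔡_{𝔪†}(i) ≤ 𝔡_𝔪(i) + 1. -/
/-- The data of the Mœglin–Waldspurger step on a multisegment `Δ : I → Segment`:
`m0 = min 𝔪` and the list `Ls` of leading indices `i₁, …, i_k` (so `I* = {i ∈ Ls}`). -/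
structure MWData (I : Type*) where
  Δ : I → Segment
  m0 : ℤ
  hm0 : IsLeast {x | ∃ i, (Δ i).a = x} m0
  Ls : List I
  hne : Ls ≠ []
  hnodup : Ls.Nodup
  hhead : (Δ (Ls.head hne)).a = m0 ∧
    ∀ i, (Δ i).a = m0 → (Δ (Ls.head hne)).b ≤ (Δ i).b
  hchain : Ls.Chain' fun p q =>
    Segment.ll (Δ p) (Δ q) ∧ (Δ q).a = (Δ p).a + 1 ∧
      ∀ i, Segment.ll (Δ p) (Δ i) → (Δ i).a = (Δ p).a + 1 → (Δ q).b ≤ (Δ i).b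
  hlast : ¬ ∃ i, Segment.ll (Δ (Ls.getLast hne)) (Δ i) ∧
    (Δ i).a = (Δ (Ls.getLast hne)).a + 1

/-- `Δs` is the family of segments of `𝔪† = Σ Δ*_i`, where `Δ*_i = ⁻Δ_i = [b(Δ_i)+1, e(Δ_i)]`
for leading indices `i ∈ I*` and `Δ*_i = Δ_i` otherwise. -/
def IsMWDagger {I : Type*} (M : MWData I) (Δs : I → Segment) : Prop :=
  (∀ i ∈ M.Ls, (Δs i).a = (M.Δ i).a + 1 ∧ (Δs i).b = (M.Δ i).b) ∧
  ∀ i ∉ M.Ls, Δs i = M.Δ i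

/-- A multisegment is non-degenerate if no segment equals `[min 𝔪, min 𝔪]`. -/
def NonDeg {I : Type*} (Δ : I → Segment) (m0 : ℤ) : Prop :=
  ∀ i, ¬ ((Δ i).a = m0 ∧ (Δ i).b = m0)

section MWAux

variable {I : Type*}

lemma chainFrom_iff_list (Δ : I → Segment) (i : I) (j : ℕ) :
    ChainFrom Δ i j ↔ ∃ l : List I,
      List.Chain (fun p q => Segment.ll (Δ p) (Δ q)) i l ∧ l.length = j := by
  constructor
  · intro h
    induction j generalizing i with
    | zero => exact ⟨[], List.Chain.nil, rfl⟩
    | succ j ih =>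
      obtain ⟨f, h0, hl⟩ := h
      obtain ⟨l, hc, hlen⟩ := ih (f 1) ⟨fun r => f r.succ, rfl, fun r => by
        have := hl r.succ
        simpa [← Fin.succ_castSucc] using this⟩
      refine ⟨f 1 :: l, List.Chain.cons ?_ hc, by simp [hlen]⟩
      have := hl 0
      simpa [h0, Fin.castSucc_zero, Fin.succ_zero_eq_one] using this
  · rintro ⟨l, hc, rfl⟩
    induction l generalizing i with
    | nil => exact ⟨fun _ => i, rfl, fun r => r.elim0⟩
    | cons x t ih =>
      obtain ⟨hix, hc⟩ := List.chain_cons.mp hc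
      obtain ⟨f, h0, hl⟩ := ih x hc
      refine ⟨Fin.cases i f, by simp, fun r => ?_⟩
      induction r using Fin.cases with
      | zero =>
        simp only [Fin.castSucc_zero, Fin.cases_zero, Fin.cases_succ, h0]
        exact hix
      | succ r =>
        have := hl r
        rw [← Fin.succ_castSucc]
        simp only [Fin.cases_succ]
        exact this

variable (M : MWData I) (Δs : I → Segment)

lemma dag_b (hΔs : IsMWDagger M Δs) (x : I) : (Δs x).b = (M.Δ x).b := by
  by_cases hx : x ∈ M.Ls
  · exact (hΔs.1 x hx).2
  · rw [hΔs.2 x hx]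

lemma dag_a_ge (hΔs : IsMWDagger M Δs) (x : I) : (M.Δ x).a ≤ (Δs x).a := by
  by_cases hx : x ∈ M.Ls
  · rw [(hΔs.1 x hx).1]; omega
  · rw [hΔs.2 x hx]

lemma dag_a_le (hΔs : IsMWDagger M Δs) (x : I) : (Δs x).a ≤ (M.Δ x).a + 1 := by
  by_cases hx : x ∈ M.Ls
  · rw [(hΔs.1 x hx).1]
  · rw [hΔs.2 x hx]; omega

lemma not_mem_of_a_eq (hΔs : IsMWDagger M Δs) {x : I} (h : (Δs x).a = (M.Δ x).a) : x ∉ M.Ls := by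
  intro hx
  have := (hΔs.1 x hx).1
  omega

lemma mem_of_a_eq (hΔs : IsMWDagger M Δs) {x : I} (h : (Δs x).a = (M.Δ x).a + 1) : x ∈ M.Ls := by
  by_contra hx
  rw [hΔs.2 x hx] at h
  omega

lemma Ls_pair (s : ℕ) (h : s + 1 < M.Ls.length) :
    Segment.ll (M.Δ (M.Ls.get ⟨s, by omega⟩)) (M.Δ (M.Ls.get ⟨s + 1, h⟩)) ∧
    (M.Δ (M.Ls.get ⟨s + 1, h⟩)).a = (M.Δ (M.Ls.get ⟨s, by omega⟩)).a + 1 ∧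
    ∀ x, Segment.ll (M.Δ (M.Ls.get ⟨s, by omega⟩)) (M.Δ x) →
      (M.Δ x).a = (M.Δ (M.Ls.get ⟨s, by omega⟩)).a + 1 →
      (M.Δ (M.Ls.get ⟨s + 1, h⟩)).b ≤ (M.Δ x).b :=
  List.isChain_iff_getElem.mp M.hchain s (by omega)

lemma Ls_head_eq : M.Ls.head M.hne = M.Ls.get ⟨0, by
    cases h : M.Ls with
    | nil => exact absurd h M.hne
    | cons a t => simp⟩ := by
  rw [List.head_eq_getElem_zero, List.get_eq_getElem]

lemma Ls_getLast_eq (h : M.Ls.length - 1 < M.Ls.length) :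
    M.Ls.getLast M.hne = M.Ls.get ⟨M.Ls.length - 1, h⟩ := by
  rw [List.getLast_eq_getElem, List.get_eq_getElem]

/-- Lemma A : an ascending chain for `Δ` yields one of the same length for `Δ†`. -/
lemma lemA (hΔs : IsMWDagger M Δs) : ∀ (l : List I) (p : I),
    List.Chain (fun x y => Segment.ll (M.Δ x) (M.Δ y)) p l →
    ∃ l', List.Chain (fun x y => Segment.ll (Δs x) (Δs y)) p l' ∧ l'.length = l.length := by
  intro l
  induction l with
  | nil => exact fun p _ => ⟨[], List.Chain.nil, rfl⟩
  | cons f1 t ih =>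
    intro p hc
    obtain ⟨hpf, hc⟩ := List.chain_cons.mp hc
    have hb : (Δs p).b < (Δs f1).b := by
      rw [dag_b M Δs hΔs, dag_b M Δs hΔs]; exact hpf.2
    by_cases hlt : (Δs p).a < (Δs f1).a
    · obtain ⟨l', hc', hlen'⟩ := ih f1 hc
      exact ⟨f1 :: l', List.Chain.cons ⟨hlt, hb⟩ hc', by simp [hlen']⟩
    · -- all the `a`'s are pinned down
      have h1 : (M.Δ p).a < (M.Δ f1).a := hpf.1
      have h2 : (M.Δ f1).a ≤ (Δs f1).a := dag_a_ge M Δs hΔs f1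
      have h3 : (Δs p).a ≤ (M.Δ p).a + 1 := dag_a_le M Δs hΔs p
      have hpa : (Δs p).a = (M.Δ p).a + 1 := by omega
      have hfa : (M.Δ f1).a = (M.Δ p).a + 1 := by omega
      have hp : p ∈ M.Ls := mem_of_a_eq M Δs hΔs hpa
      obtain ⟨s, hs⟩ := List.get_of_mem hp
      by_cases hsl : (s : ℕ) + 1 < M.Ls.length
      · obtain ⟨hll, hcons, hmin⟩ := Ls_pair M s hsl
        set p' := M.Ls.get ⟨(s : ℕ) + 1, hsl⟩ with hp'
        have hsp : M.Ls.get ⟨(s : ℕ), by omega⟩ = p := by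
          rw [← hs]
        rw [hsp] at hll hcons hmin
        have hbp' : (M.Δ p').b ≤ (M.Δ f1).b := hmin f1 hpf hfa
        -- replace f1 by p' in the tail chain
        have hc2 : List.Chain (fun x y => Segment.ll (M.Δ x) (M.Δ y)) p' t := by
          cases t with
          | nil => exact List.Chain.nil
          | cons y t' =>
            obtain ⟨hfy, hct⟩ := List.chain_cons.mp hc
            exact List.Chain.cons ⟨by have := hfy.1; omega, by have := hfy.2; omega⟩ hct
        obtain ⟨l', hc', hlen'⟩ := ih p' hc2
        refine ⟨p' :: l', List.Chain.cons ?_ hc', by simp [hlen']⟩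
        constructor
        · rw [hpa, (hΔs.1 p' (List.get_mem _ _)).1]
          have := hll.1; omega
        · rw [dag_b M Δs hΔs, dag_b M Δs hΔs]; exact hll.2
      · -- p is the last element of Ls : contradiction with hlast
        exfalso
        have hsl' : (s : ℕ) = M.Ls.length - 1 := by have := s.isLt; omega
        have : M.Ls.getLast M.hne = p := by
          rw [Ls_getLast_eq M (by have := s.isLt; omega), ← hs]
          congr 1
          exact Fin.ext (by simp [hsl'])
        exact M.hlast ⟨f1, by rw [this]; exact hpf, by rw [this]; exact hfa⟩

/-- Lemma B : an ascending chain for `Δ†` yields one of the same length for `Δ`,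
starting either at the same index, or at a leading index just below it. -/
lemma lemB (hΔs : IsMWDagger M Δs) : ∀ (l : List I) (p : I),
    List.Chain (fun x y => Segment.ll (Δs x) (Δs y)) p l →
    (∃ l', List.Chain (fun x y => Segment.ll (M.Δ x) (M.Δ y)) p l' ∧ l'.length = l.length) ∨
    (p ∉ M.Ls ∧ ∃ (u : ℕ) (hu : u < M.Ls.length),
      (M.Δ (M.Ls.get ⟨u, hu⟩)).a + 1 = (M.Δ p).a ∧
      (M.Δ p).b ≤ (M.Δ (M.Ls.get ⟨u, hu⟩)).b ∧
      ∃ l', List.Chain (fun x y => Segment.ll (M.Δ x) (M.Δ y)) (M.Ls.get ⟨u, hu⟩) l' ∧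
        l'.length = l.length) := by
  intro l
  induction l with
  | nil => exact fun p _ => Or.inl ⟨[], List.Chain.nil, rfl⟩
  | cons g1 t ih =>
    intro p hc
    obtain ⟨hpg, hct⟩ := List.chain_cons.mp hc
    have hpga : (Δs p).a < (Δs g1).a := hpg.1
    have hpgb : (M.Δ p).b < (M.Δ g1).b := by
      have := hpg.2; rw [dag_b M Δs hΔs, dag_b M Δs hΔs] at this; exact this
    have hage_p : (M.Δ p).a ≤ (Δs p).a := dag_a_ge M Δs hΔs p
    have hale_p : (Δs p).a ≤ (M.Δ p).a + 1 := dag_a_le M Δs hΔs p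
    have hage_g : (M.Δ g1).a ≤ (Δs g1).a := dag_a_ge M Δs hΔs g1
    have hale_g : (Δs g1).a ≤ (M.Δ g1).a + 1 := dag_a_le M Δs hΔs g1
    rcases ih g1 hct with ⟨l', hc', hlen'⟩ | ⟨hg1n, u, hu, hqa, hqb, l', hc', hlen'⟩
    · by_cases hcmp : (M.Δ p).a < (M.Δ g1).a
      · exact Or.inl ⟨g1 :: l', List.Chain.cons ⟨hcmp, hpgb⟩ hc', by simp [hlen']⟩
      · -- (Δ p).a = (Δ g1).a, p ∉ Ls, g1 ∈ Ls
        have hpa : (Δs p).a = (M.Δ p).a := by omega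
        have hga : (Δs g1).a = (M.Δ g1).a + 1 := by omega
        have haeq : (M.Δ p).a = (M.Δ g1).a := by omega
        have hpn : p ∉ M.Ls := not_mem_of_a_eq M Δs hΔs hpa
        have hg1 : g1 ∈ M.Ls := mem_of_a_eq M Δs hΔs hga
        obtain ⟨s, hs⟩ := List.get_of_mem hg1
        rcases Nat.eq_zero_or_eq_succ_pred (s : ℕ) with h0 | hsucc
        · -- g1 is the head : contradiction with minimality of b at level m0
          exfalso
          have hhd : M.Ls.head M.hne = g1 := by
            rw [Ls_head_eq M, ← hs]; congr 1; exact Fin.ext (by simp [h0])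
          have h1 := M.hhead.1
          rw [← hhd] at haeq
          have h2 := M.hhead.2 p (by omega)
          rw [hhd] at h2
          omega
        · -- g1 = Ls[s'+1]; use its predecessor
          set s' := (s : ℕ) - 1 with hs'
          have hsl : s' + 1 < M.Ls.length := by have := s.isLt; omega
          obtain ⟨hll, hcons, hmin⟩ := Ls_pair M s' hsl
          have hsg : M.Ls.get ⟨s' + 1, hsl⟩ = g1 := by
            rw [← hs]; congr 1; exact Fin.ext (by simp; omega)
          rw [hsg] at hll hcons hmin
          refine Or.inr ⟨hpn, s', by omega, by omega, ?_, g1 :: l',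
            List.Chain.cons hll hc', by simp [hlen']⟩
          by_contra hb
          push_neg at hb
          have := hmin p ⟨by omega, hb⟩ (by omega)
          omega
    · -- IH gave a chain from q1 = Ls[u]
      have hg1a : (Δs g1).a = (M.Δ g1).a := by rw [hΔs.2 g1 hg1n]
      set q1 := M.Ls.get ⟨u, hu⟩ with hq1
      have hpb' : (M.Δ p).b < (M.Δ q1).b := by omega
      by_cases hcmp : (M.Δ p).a < (M.Δ q1).a
      · exact Or.inl ⟨q1 :: l', List.Chain.cons ⟨hcmp, hpb'⟩ hc', by simp [hlen']⟩
      · have haeq : (M.Δ p).a = (M.Δ q1).a := by omega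
        have hpa : (Δs p).a = (M.Δ p).a := by omega
        have hpn : p ∉ M.Ls := not_mem_of_a_eq M Δs hΔs hpa
        rcases Nat.eq_zero_or_eq_succ_pred u with h0 | hsucc
        · exfalso
          have hhd : M.Ls.head M.hne = q1 := by
            rw [Ls_head_eq M, hq1]; congr 1; exact Fin.ext (by simp [h0])
          have h1 := M.hhead.1
          rw [← hhd] at haeq
          have h2 := M.hhead.2 p (by omega)
          rw [hhd] at h2
          omega
        · set s' := u - 1 with hs'
          have hsl : s' + 1 < M.Ls.length := by omega
          obtain ⟨hll, hcons, hmin⟩ := Ls_pair M s' hsl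
          have hsg : M.Ls.get ⟨s' + 1, hsl⟩ = q1 := by
            rw [hq1]; congr 1; exact Fin.ext (by simp; omega)
          rw [hsg] at hll hcons hmin
          refine Or.inr ⟨hpn, s', by omega, by omega, ?_, q1 :: l',
            List.Chain.cons hll hc', by simp [hlen']⟩
          by_contra hb
          push_neg at hb
          have := hmin p ⟨by omega, hb⟩ (by omega)
          omega

end MWAux

/-- For a non-degenerate multisegment, the depth with respect to `𝔪†` differs from the depth
with respect to `𝔪` by at most one: `d i ≤ d† i ≤ d i + 1`. -/
theorem mw_depth_bounds {I : Type*} [Fintype I] (M : MWData I)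
    (hnd : NonDeg M.Δ M.m0)
    (Δs : I → Segment) (hΔs : IsMWDagger M Δs)
    (d ds : I → ℕ) (hd : IsDepth M.Δ d) (hds : IsDepth Δs ds) :
    ∀ i, d i ≤ ds i ∧ ds i ≤ d i + 1 := by
  intro i
  constructor
  · refine (hds i).2 ?_
    have h1 : ChainFrom M.Δ i (d i) := (hd i).1
    have h2 : ChainFrom Δs i (d i) := by
      rw [chainFrom_iff_list] at h1 ⊢
      obtain ⟨l, hc, hlen⟩ := h1
      obtain ⟨l', hc', hlen'⟩ := lemA M Δs hΔs l i hc
      exact ⟨l', hc', by omega⟩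
    exact h2
  · have h1 := (hds i).1
    have h1 : ChainFrom Δs i (ds i) := h1
    rw [chainFrom_iff_list] at h1
    obtain ⟨l, hc, hlen⟩ := h1
    rcases lemB M Δs hΔs l i hc with ⟨l', hc', hlen'⟩ |
      ⟨hpn, u, hu, hqa, hqb, l', hc', hlen'⟩
    · have h2 : ChainFrom M.Δ i (ds i) :=
        (chainFrom_iff_list _ _ _).mpr ⟨l', hc', by omega⟩
      have := (hd i).2 h2
      omega
    · rcases l' with _ | ⟨y, _ | ⟨z, t2⟩⟩
      · simp at hlen'; omega
      · simp at hlen'; omega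
      · obtain ⟨hqy, hc2⟩ := List.chain_cons.mp hc'
        obtain ⟨hyz, hc3⟩ := List.chain_cons.mp hc2
        have hiz : Segment.ll (M.Δ i) (M.Δ z) := by
          constructor
          · have := hqy.1; have := hyz.1; omega
          · have := hqy.2; have := hyz.2; omega
        have h2 : ChainFrom M.Δ i (t2.length + 1) :=
          (chainFrom_iff_list _ _ _).mpr ⟨z :: t2, List.Chain.cons hiz hc3, by simp⟩
        have h3 := (hd i).2 h2
        have h4 : l.length = t2.length + 2 := by simp at hlen'; omega
        omega
end

section
/- Let 𝔪 be a non-degenerate multisegment with leading index set I* and 𝔪† as in the Mœglin–Waldspurger algorithm. Then the depth function 𝔡_𝔪 is injective on I*, and the maximal depths agree: d(𝔪) = d(𝔪†). -/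
namespace MWAux

variable {I : Type*}

def NChain (Δ : I → Segment) (f : ℕ → I) (L : ℕ) : Prop :=
  ∀ r, r < L → Segment.ll (Δ (f r)) (Δ (f (r + 1)))

theorem chainFrom_iff (Δ : I → Segment) (i : I) (L : ℕ) :
    ChainFrom Δ i L ↔ ∃ f : ℕ → I, f 0 = i ∧ NChain Δ f L := by
  constructor
  · rintro ⟨f, h0, hf⟩
    refine ⟨fun r => f ⟨min r L, by omega⟩, by simpa using h0, ?_⟩
    intro r hr
    have := hf ⟨r, hr⟩
    rw [Fin.castSucc_mk, Fin.succ_mk] at this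
    have e1 : (⟨min r L, by omega⟩ : Fin (L + 1)) = ⟨r, by omega⟩ := by
      ext; simp; omega
    have e2 : (⟨min (r + 1) L, by omega⟩ : Fin (L + 1)) = ⟨r + 1, by omega⟩ := by
      ext; simp; omega
    simp only [e1, e2]; exact this
  · rintro ⟨f, h0, hf⟩
    refine ⟨fun r => f r.val, by simpa using h0, ?_⟩
    intro r
    simpa using hf r.val r.isLt

theorem depth_lt {Δ : I → Segment} {d : I → ℕ} (hd : IsDepth Δ d) {p q : I}
    (h : Segment.ll (Δ p) (Δ q)) : d q < d p := by
  obtain ⟨f, hf0, hf⟩ := (chainFrom_iff Δ q (d q)).mp (hd q).1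
  have hc : ChainFrom Δ p (d q + 1) := by
    rw [chainFrom_iff]
    refine ⟨fun r => match r with | 0 => p | r + 1 => f r, rfl, ?_⟩
    intro r hr
    cases r with
    | zero => show Segment.ll (Δ p) (Δ (f 0)); rw [hf0]; exact h
    | succ s => exact hf s (by omega)
  exact Nat.lt_of_succ_le ((hd p).2 hc)

section Dagger

variable (M : MWData I) {Δs : I → Segment} (hΔs : IsMWDagger M Δs)
include hΔs

theorem hB (i : I) : (Δs i).b = (M.Δ i).b := by
  by_cases h : i ∈ M.Ls
  · exact (hΔs.1 i h).2
  · rw [hΔs.2 i h]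

theorem hA_le (i : I) : (M.Δ i).a ≤ (Δs i).a ∧ (Δs i).a ≤ (M.Δ i).a + 1 := by
  by_cases h : i ∈ M.Ls
  · rw [(hΔs.1 i h).1]; omega
  · rw [hΔs.2 i h]; omega

theorem hA_mem {i : I} (h : i ∈ M.Ls) : (Δs i).a = (M.Δ i).a + 1 := (hΔs.1 i h).1

theorem hA_nmem {i : I} (h : i ∉ M.Ls) : (Δs i).a = (M.Δ i).a := by rw [hΔs.2 i h]

/-- forward repair: a `≪`-chain in `𝔪` yields one of the same length in `𝔪†`. -/
theorem fwd : ∀ (L : ℕ) (f : ℕ → I) (i : I), NChain M.Δ f L →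
    (M.Δ i).a = (M.Δ (f 0)).a → (M.Δ i).b ≤ (M.Δ (f 0)).b → (i = f 0 ∨ i ∈ M.Ls) →
    ∃ g : ℕ → I, g 0 = i ∧ NChain Δs g L := by
  intro L
  induction L with
  | zero => exact fun f i _ _ _ _ => ⟨fun _ => i, rfl, fun r hr => absurd hr (by omega)⟩
  | succ L ih =>
    intro f i hf hA hBle hT
    have hch := List.isChain_iff_getElem.mp M.hchain
    obtain ⟨hA01, hB01⟩ := hf 0 (by omega)
    simp only [Nat.zero_add] at hA01 hB01
    obtain ⟨i', hlink, hA', hB', hT'⟩ :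
        ∃ i', Segment.ll (Δs i) (Δs i') ∧ (M.Δ i').a = (M.Δ (f 1)).a ∧
          (M.Δ i').b ≤ (M.Δ (f 1)).b ∧ (i' = f 1 ∨ i' ∈ M.Ls) := by
      by_cases hc : Segment.ll (Δs i) (Δs (f 1))
      · exact ⟨f 1, hc, rfl, le_refl _, Or.inl rfl⟩
      -- bad case analysis
      have hb' : (Δs i).b < (Δs (f 1)).b := by
        rw [hB M hΔs, hB M hΔs]; omega
      have ha' : ¬ (Δs i).a < (Δs (f 1)).a := fun h => hc ⟨h, hb'⟩
      have h1 := hA_le M hΔs i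
      have h2 := hA_le M hΔs (f 1)
      have hiLs : i ∈ M.Ls := by
        by_contra hmem
        have := hA_nmem M hΔs hmem
        omega
      have hAi1 : (Δs i).a = (M.Δ i).a + 1 := hA_mem M hΔs hiLs
      have key1 : (M.Δ (f 1)).a = (M.Δ i).a + 1 := by omega
      have hll : Segment.ll (M.Δ i) (M.Δ (f 1)) := ⟨by omega, by omega⟩
      obtain ⟨j, hj, hgetj⟩ := List.mem_iff_getElem.mp hiLs
      by_cases hjl : j + 1 < M.Ls.length
      · have htrip := hch j (by omega)
        rw [hgetj] at htrip
        obtain ⟨q, hqmem, hll', ha'', hmin⟩ :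
            ∃ q, q ∈ M.Ls ∧ Segment.ll (M.Δ i) (M.Δ q) ∧ (M.Δ q).a = (M.Δ i).a + 1 ∧
              ∀ k, Segment.ll (M.Δ i) (M.Δ k) → (M.Δ k).a = (M.Δ i).a + 1 →
                (M.Δ q).b ≤ (M.Δ k).b :=
          ⟨M.Ls[j + 1], List.getElem_mem _, htrip.1, htrip.2.1, htrip.2.2⟩
        have hBmin : (M.Δ q).b ≤ (M.Δ (f 1)).b := hmin (f 1) hll (by omega)
        refine ⟨q, ⟨?_, ?_⟩, by omega, hBmin, Or.inr hqmem⟩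
        · rw [hAi1, hA_mem M hΔs hqmem]
          omega
        · rw [hB M hΔs, hB M hΔs]
          exact hll'.2
      · exfalso
        have hilast : M.Ls.getLast M.hne = i := by
          rw [List.getLast_eq_getElem]
          have : M.Ls.length - 1 = j := by omega
          simp only [this]; exact hgetj
        exact M.hlast ⟨f 1, by rw [hilast]; exact hll, by rw [hilast]; omega⟩
    obtain ⟨g, hg0, hg⟩ := ih (fun r => f (r + 1)) i' (fun r hr => hf (r + 1) (by omega)) hA' hB' hT'
    refine ⟨fun r => match r with | 0 => i | r + 1 => g r, rfl, ?_⟩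
    intro r hr
    cases r with
    | zero => show Segment.ll (Δs i) (Δs (g 0)); rw [hg0]; exact hlink
    | succ s => exact hg s (by omega)

/-- backward repair: a `≪`-chain in `𝔪†` yields one of the same length in `𝔪`. -/
theorem bwd : ∀ (L : ℕ) (g : ℕ → I), NChain Δs g L →
    ∃ h : ℕ → I, NChain M.Δ h L ∧ (h 0 = g 0 ∨ h 0 ∈ M.Ls) ∧
      (Δs (g 0)).a ≤ (M.Δ (h 0)).a + 1 ∧ (M.Δ (g 0)).b ≤ (M.Δ (h 0)).b := by
  intro L
  induction L with
  | zero =>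
    intro g _
    exact ⟨g, fun r hr => absurd hr (by omega), Or.inl rfl, (hA_le M hΔs (g 0)).2, le_refl _⟩
  | succ L ih =>
    intro g hg
    have hch := List.isChain_iff_getElem.mp M.hchain
    obtain ⟨h', hch', hT', hS', hR'⟩ := ih (fun r => g (r + 1)) (fun r hr => hg (r + 1) (by omega))
    simp only [Nat.zero_add] at hT' hS' hR'
    obtain ⟨ha01, hb01⟩ := hg 0 (by omega)
    simp only [Nat.zero_add] at ha01 hb01
    rw [hB M hΔs, hB M hΔs] at hb01
    by_cases hc : Segment.ll (M.Δ (g 0)) (M.Δ (h' 0))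
    · refine ⟨fun r => match r with | 0 => g 0 | r + 1 => h' r, ?_, Or.inl rfl,
        (hA_le M hΔs (g 0)).2, le_refl _⟩
      intro r hr
      cases r with
      | zero => exact hc
      | succ s => exact hch' s (by omega)
    · have hb0 : (M.Δ (g 0)).b < (M.Δ (h' 0)).b := by omega
      have ha0 : ¬ (M.Δ (g 0)).a < (M.Δ (h' 0)).a := fun h => hc ⟨h, hb0⟩
      have h1 := hA_le M hΔs (g 0)
      have h2 := hA_le M hΔs (g 1)
      -- sandwich
      have e1 : (M.Δ (g 0)).a = (M.Δ (h' 0)).a := by omega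
      have e2 : (Δs (g 0)).a = (M.Δ (g 0)).a := by omega
      have e3 : (M.Δ (h' 0)).a + 1 = (Δs (g 1)).a := by omega
      have hmem : h' 0 ∈ M.Ls := by
        rcases hT' with hEq | hm
        · by_cases hm1 : g 1 ∈ M.Ls
          · rwa [hEq]
          · exfalso
            have hnm := hA_nmem M hΔs hm1
            have heq2 : (M.Δ (h' 0)).a = (M.Δ (g 1)).a := by rw [hEq]
            omega
        · exact hm
      obtain ⟨j, hj, hgetj⟩ := List.mem_iff_getElem.mp hmem
      by_cases hj0 : j = 0
      · exfalso
        have hhd : M.Ls.head M.hne = h' 0 := by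
          rw [List.head_eq_getElem_zero]
          subst hj0; exact hgetj
        have hA0 : (M.Δ (h' 0)).a = M.m0 := by rw [← hhd]; exact M.hhead.1
        have := M.hhead.2 (g 0) (by omega)
        rw [hhd] at this
        omega
      · have hjj : j - 1 + 1 < M.Ls.length := by omega
        have htrip := hch (j - 1) (by omega)
        have ej : j - 1 + 1 = j := by omega
        simp only [ej] at htrip
        rw [hgetj] at htrip
        obtain ⟨p, hpmem, hllp, hap, hminp⟩ :
            ∃ p, p ∈ M.Ls ∧ Segment.ll (M.Δ p) (M.Δ (h' 0)) ∧
              (M.Δ (h' 0)).a = (M.Δ p).a + 1 ∧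
              ∀ k, Segment.ll (M.Δ p) (M.Δ k) → (M.Δ k).a = (M.Δ p).a + 1 →
                (M.Δ (h' 0)).b ≤ (M.Δ k).b :=
          ⟨M.Ls[j - 1]'(by omega), List.getElem_mem _, htrip.1, htrip.2.1, htrip.2.2⟩
        have hRp : (M.Δ (g 0)).b ≤ (M.Δ p).b := by
          by_contra hbad
          push_neg at hbad
          have := hminp (g 0) ⟨by omega, hbad⟩ (by omega)
          omega
        refine ⟨fun r => match r with | 0 => p | r + 1 => h' r, ?_,
          Or.inr hpmem, ?_, hRp⟩
        swap
        · show (Δs (g 0)).a ≤ (M.Δ p).a + 1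
          omega
        intro r hr
        cases r with
        | zero => exact hllp
        | succ s => exact hch' s (by omega)

end Dagger
end MWAux

/-- For a non-degenerate multisegment, the depth function is injective on the set of leading
indices `I*`, and the maximal depths of `𝔪` and `𝔪†` agree. -/
theorem mw_depth_injOn_and_max_eq {I : Type*} [Fintype I] (M : MWData I)
    (hnd : NonDeg M.Δ M.m0)
    (Δs : I → Segment) (hΔs : IsMWDagger M Δs)
    (d ds : I → ℕ) (hd : IsDepth M.Δ d) (hds : IsDepth Δs ds)
    (dm dms : ℕ) (hdm : IsGreatest (Set.range d) dm)
    (hdms : IsGreatest (Set.range ds) dms) :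
    Set.InjOn d {i | i ∈ M.Ls} ∧ dm = dms := by
  constructor
  · -- injectivity of the depth function on `I*`
    haveI : IsTrans I (fun p q => d q < d p) := ⟨fun _ _ _ h1 h2 => lt_trans h2 h1⟩
    have hdec : M.Ls.Chain' (fun p q => d q < d p) :=
      M.hchain.imp (fun _ _ h => MWAux.depth_lt hd h.1)
    have hpw : M.Ls.Pairwise (fun p q => d p ≠ d q) :=
      (List.isChain_iff_pairwise.mp hdec).imp (fun h => Nat.ne_of_gt h)
    intro x hx y hy hxy
    by_contra hne
    exact (by have : Std.Symm (fun p q : I => d p ≠ d q) := ⟨fun _ _ h => Ne.symm h⟩; exact hpw.forall hx hy hne hxy)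
  · -- equality of the maximal depths
    obtain ⟨i0, hi0⟩ := hdm.1
    have hc0 : ChainFrom M.Δ i0 dm := hi0 ▸ (hd i0).1
    rw [MWAux.chainFrom_iff] at hc0
    obtain ⟨f, hf0, hf⟩ := hc0
    obtain ⟨g, hg0, hg⟩ := MWAux.fwd M hΔs dm f (f 0) hf rfl le_rfl (Or.inl rfl)
    have h1 : dm ≤ ds (f 0) := (hds (f 0)).2 ((MWAux.chainFrom_iff _ _ _).mpr ⟨g, hg0, hg⟩)
    have h2 : ds (f 0) ≤ dms := hdms.2 ⟨f 0, rfl⟩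
    obtain ⟨i1, hi1⟩ := hdms.1
    have hc1 : ChainFrom Δs i1 dms := hi1 ▸ (hds i1).1
    rw [MWAux.chainFrom_iff] at hc1
    obtain ⟨g', hg'0, hg'⟩ := hc1
    obtain ⟨h, hh, -, -, -⟩ := MWAux.bwd M hΔs dms g' hg'
    have h3 : dms ≤ d (h 0) := (hd (h 0)).2 ((MWAux.chainFrom_iff _ _ _).mpr ⟨h, rfl, hh⟩)
    have h4 : d (h 0) ≤ dm := hdm.2 ⟨h 0, rfl⟩
    omega
end

section
/- Let 𝔪 be a nonzero multisegment with min 𝔪 < min 𝔩(𝔪), where 𝔩(𝔪) is the highest ladder of the Knuth step. Then for any leading index i ∈ I* of 𝔪, there exists j ∈ I with b(Δ_j) > b(Δ_i) and 𝔡_𝔪(i) = 𝔡_𝔪(j); in particular 𝔪 is non-degenerate. -/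
section Aux

variable {I : Type*} {Δ : I → Segment} {d : I → ℕ}

/-- If `Δ i ≪ Δ j` then the depth of `j` is strictly smaller than the depth of `i`. -/
lemma depth_lt_of_ll (hd : IsDepth Δ d) {i j : I} (h : Segment.ll (Δ i) (Δ j)) :
    d j < d i := by
  obtain ⟨f, hf0, hfc⟩ := (hd j).1
  have hchain : ChainFrom Δ i (d j + 1) := by
    refine ⟨Fin.cases i f, by simp, ?_⟩
    intro r
    induction r using Fin.cases with
    | zero =>
      simp only [Fin.castSucc_zero, Fin.cases_zero, Fin.cases_succ, hf0]
      exact h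
    | succ s =>
      simp only [← Fin.succ_castSucc, Fin.cases_succ]
      exact hfc s
  have := (hd i).2 hchain
  omega

/-- From an index of positive depth, one can step down along `≪` to depth one less. -/
lemma exists_ll_depth_pred (hd : IsDepth Δ d) {i : I} (h : 1 ≤ d i) :
    ∃ j, Segment.ll (Δ i) (Δ j) ∧ d j = d i - 1 := by
  obtain ⟨f, hf0, hfc⟩ := (hd i).1
  set r0 : Fin (d i) := ⟨0, h⟩ with hr0
  have hcast : (Fin.castSucc r0) = 0 := by
    apply Fin.ext; simp [hr0]
  have hll : Segment.ll (Δ i) (Δ (f (Fin.succ r0))) := by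
    have := hfc r0
    rwa [hcast, hf0] at this
  refine ⟨f (Fin.succ r0), hll, ?_⟩
  have hlt : d (f (Fin.succ r0)) < d i := depth_lt_of_ll hd hll
  have hge : d i - 1 ≤ d (f (Fin.succ r0)) := by
    apply (hd (f (Fin.succ r0))).2
    refine ⟨fun k => f ⟨k.val + 1, by omega⟩, ?_, ?_⟩
    · apply congrArg f
      apply Fin.ext
      simp [hr0]
    · intro r
      have hr1 : r.val + 1 < d i := by omega
      have := hfc ⟨r.val + 1, hr1⟩
      have e1 : Fin.castSucc (⟨r.val + 1, hr1⟩ : Fin (d i)) =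
          ⟨(Fin.castSucc r).val + 1, by omega⟩ := by
        apply Fin.ext; simp
      have e2 : Fin.succ (⟨r.val + 1, hr1⟩ : Fin (d i)) =
          ⟨(Fin.succ r).val + 1, by omega⟩ := by
        apply Fin.ext; simp
      rw [e1, e2] at this
      exact this
  omega

/-- Iterated descent: for any `m ≤ d i` there is `j` of depth `d i - m` whose begin point
is at least `(Δ i).a + m`. -/
lemma exists_depth_sub (hd : IsDepth Δ d) (i : I) :
    ∀ m : ℕ, m ≤ d i → ∃ j, d j = d i - m ∧ (Δ i).a + m ≤ (Δ j).a := by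
  intro m
  induction m with
  | zero => intro _; exact ⟨i, by simp, by simp⟩
  | succ m ih =>
    intro hm
    obtain ⟨j, hdj, haj⟩ := ih (by omega)
    have hj1 : 1 ≤ d j := by omega
    obtain ⟨j', hll, hdj'⟩ := exists_ll_depth_pred hd hj1
    refine ⟨j', by omega, ?_⟩
    have := hll.1
    push_cast
    linarith

/-- Propagate a predicate along a `Chain'` from the head. -/
lemma chain_all {α : Type*} {R : α → α → Prop} {P : α → Prop} :
    ∀ {l : List α}, l.Chain' R → (∀ h : l ≠ [], P (l.head h)) →
      (∀ p q, R p q → P p → P q) → ∀ i ∈ l, P i := by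
  intro l
  induction l with
  | nil => simp
  | cons a tl ih =>
    intro hc hhd hstep i hi
    rcases List.mem_cons.1 hi with rfl | hi'
    · exact hhd (by simp)
    · cases tl with
      | nil => simp at hi'
      | cons b tl' =>
        replace hc := List.isChain_cons_cons.mp hc
        exact ih hc.2 (fun _ => hstep a b hc.1 (hhd (by simp))) hstep i hi'

end Aux

/-- If `min 𝔪 < min 𝔩(𝔪)`, then for every leading index `i ∈ I*` there is `j` with
`b(Δ j) > b(Δ i)` and the same depth; in particular `𝔪` is non-degenerate. -/
theorem leading_exists_larger_begin {I : Type*} [Fintype I]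
    (K : KnuthData I) (M : MWData I) (hsame : M.Δ = K.Δ)
    (ml : ℤ) (hml : IsLeast {x | ∃ i, IhatP K i ∧ (K.Δ' i).a = x} ml)
    (hlt : M.m0 < ml) :
    (∀ i ∈ M.Ls, ∃ j, (K.Δ i).a < (K.Δ j).a ∧ K.d i = K.d j) ∧
      NonDeg K.Δ M.m0 := by
  have hch := M.hchain
  have hhead := M.hhead
  rw [hsame] at hch hhead
  -- Part 1
  have h1 : ∀ i ∈ M.Ls, ∃ j, (K.Δ i).a < (K.Δ j).a ∧ K.d i = K.d j := by
    refine chain_all (P := fun i => ∃ j, (K.Δ i).a < (K.Δ j).a ∧ K.d i = K.d j)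
      hch ?_ ?_
    · -- base case: head of the leading chain
      intro hne
      set i₁ := M.Ls.head hne with hi₁
      have hi1a : (K.Δ i₁).a = M.m0 := hhead.1
      have hmem1 : i₁ ∈ K.L (K.d i₁) := (K.hmem (K.d i₁) i₁).2 rfl
      have hLne : K.L (K.d i₁) ≠ [] := List.ne_nil_of_mem hmem1
      set ℓ := (K.L (K.d i₁)).getLast hLne with hℓ
      have hℓmem : ℓ ∈ K.L (K.d i₁) := List.getLast_mem hLne
      have hdℓ : K.d ℓ = K.d i₁ := (K.hmem (K.d i₁) ℓ).1 hℓmem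
      have hIhat : IhatP K ℓ := by
        unfold IhatP
        rw [hdℓ]
        exact List.getLast?_eq_getLast_of_ne_nil hLne
      have hml2 : ml ≤ (K.Δ' ℓ).a := hml.2 ⟨ℓ, hIhat, rfl⟩
      rw [K.hΔ'a] at hml2
      exact ⟨ℓ, by rw [hi1a]; linarith, hdℓ.symm⟩
    · -- inductive step along the leading chain
      rintro p q ⟨hllpq, haq, -⟩ ⟨j, haj, hdj⟩
      have hdq : K.d q < K.d p := depth_lt_of_ll K.hd hllpq
      set m := K.d p - K.d q with hm
      have hm1 : 1 ≤ m := by omega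
      have hmle : m ≤ K.d j := by omega
      obtain ⟨j', hdj', haj'⟩ := exists_depth_sub K.hd j m hmle
      refine ⟨j', ?_, by omega⟩
      have hm1' : (1 : ℤ) ≤ (m : ℤ) := by exact_mod_cast hm1
      rw [haq]
      linarith
  refine ⟨h1, ?_⟩
  -- Part 2: non-degeneracy
  rintro i ⟨hia, hib⟩
  set h₀ := M.Ls.head M.hne with hh₀
  have hh₀mem : h₀ ∈ M.Ls := List.head_mem M.hne
  obtain ⟨j, haj, hdj⟩ := h1 h₀ hh₀mem
  have hh₀a : (K.Δ h₀).a = M.m0 := hhead.1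
  have hh₀b : (K.Δ h₀).b ≤ M.m0 := by
    have := hhead.2 i hia
    rw [hib] at this
    exact this
  -- both h₀ and j lie in the depth fiber `L (K.d h₀)`
  have hmemh : h₀ ∈ K.L (K.d h₀) := (K.hmem (K.d h₀) h₀).2 rfl
  have hmemj : j ∈ K.L (K.d h₀) := (K.hmem (K.d h₀) j).2 hdj.symm
  have hne : h₀ ≠ j := by
    rintro rfl
    exact lt_irrefl _ haj
  have hpw : (K.L (K.d h₀)).Pairwise
      (fun p q => Segment.sub (K.Δ q) (K.Δ p) ∨ Segment.sub (K.Δ p) (K.Δ q)) := by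
    haveI htr : IsTrans I (fun p q : I => Segment.sub (K.Δ q) (K.Δ p)) :=
      ⟨fun a b c hab hbc => ⟨le_trans hab.1 hbc.1, le_trans hbc.2 hab.2⟩⟩
    have := (List.isChain_iff_pairwise (R := fun p q : I => Segment.sub (K.Δ q) (K.Δ p))
      (l := K.L (K.d h₀))).1 (K.hchain (K.d h₀))
    exact this.imp Or.inl
  have hsym : Symmetric
      (fun p q : I => Segment.sub (K.Δ q) (K.Δ p) ∨ Segment.sub (K.Δ p) (K.Δ q)) := by
    intro a b h
    exact h.symm
  have hcases := by
    haveI : Std.Symm (fun p q : I => Segment.sub (K.Δ q) (K.Δ p) ∨ Segment.sub (K.Δ p) (K.Δ q)) :=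
      ⟨fun a b h => hsym h⟩
    exact hpw.forall hmemh hmemj hne
  have hjb : (K.Δ j).a ≤ (K.Δ j).b := (K.Δ j).hle
  rcases hcases with hsub | hsub
  · -- Δ j ⊆ Δ h₀ : then b(Δ j) ≤ m0 < a(Δ j), contradiction
    have := hsub.2
    rw [hh₀a] at haj
    linarith
  · -- Δ h₀ ⊆ Δ j : then a(Δ j) ≤ a(Δ h₀) < a(Δ j), contradiction
    have := hsub.1
    linarith
end

section
/- Every Knuth equivalence class of words over the alphabet {1,…,n} contains exactly one word that is the row-reading word of a semistandard Young tableau of normal (partition) shape. -/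
/-- An elementary Knuth relation on words: `u x z y v ≡ u z x y v` when `x ≤ y < z`, and
`u y x z v ≡ u y z x v` when `x < y ≤ z`. -/
inductive KnuthRel : List ℕ → List ℕ → Prop
  | elem1 (u v : List ℕ) (x y z : ℕ) (h1 : x ≤ y) (h2 : y < z) :
      KnuthRel (u ++ [x, z, y] ++ v) (u ++ [z, x, y] ++ v)
  | elem2 (u v : List ℕ) (x y z : ℕ) (h1 : x < y) (h2 : y ≤ z) :
      KnuthRel (u ++ [y, x, z] ++ v) (u ++ [y, z, x] ++ v)

/-- Knuth equivalence: the smallest equivalence relation containing the elementary Knuth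
relations. -/
def KnuthEquiv : List ℕ → List ℕ → Prop := Relation.EqvGen KnuthRel

/-- The row-reading word of a semistandard Young tableau: read the rows left to right,
from the bottom row up. -/
def readingWord (μ : YoungDiagram) (T : SemistandardYoungTableau μ) : List ℕ :=
  ((List.range (μ.colLen 0)).reverse).flatMap fun i =>
    (List.range (μ.rowLen i)).map fun j => T i j

/-- Insert `x` into tableau (list of rows, top row first) by RSK row bumping. -/
def insTab (x : ℕ) : List (List ℕ) → List (List ℕ)
  | [] => [[x]]
  | r :: rs =>
    match r.dropWhile (· ≤ x) with
    | [] => (r ++ [x]) :: rs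
    | c :: t => (r.takeWhile (· ≤ x) ++ x :: t) :: insTab c rs

/-- The insertion tableau of a word. -/
def PTab (w : List ℕ) : List (List ℕ) := w.foldl (fun T x => insTab x T) []

/-- Reading word of a list-of-rows tableau: bottom row first. -/
def readTab (T : List (List ℕ)) : List ℕ := T.reverse.flatMap id

lemma dropWhile_eq_nil_of_all {x : ℕ} {r : List ℕ} (h : ∀ e ∈ r, e ≤ x) :
    r.dropWhile (· ≤ x) = [] := by
  rw [List.dropWhile_eq_nil_iff]
  intro e he; simpa using h e he

lemma takeWhile_append_cons {x c : ℕ} {a t : List ℕ} (ha : ∀ e ∈ a, e ≤ x) (hc : x < c) :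
    (a ++ c :: t).takeWhile (· ≤ x) = a := by
  induction a with
  | nil => simp [List.takeWhile_cons, Nat.not_le.mpr hc]
  | cons e a ih =>
    have he : e ≤ x := ha e (by simp)
    simp only [List.cons_append, List.takeWhile_cons, decide_eq_true_eq, he, if_pos]
    rw [ih (fun e he => ha e (by simp [he]))]

lemma dropWhile_append_cons {x c : ℕ} {a t : List ℕ} (ha : ∀ e ∈ a, e ≤ x) (hc : x < c) :
    (a ++ c :: t).dropWhile (· ≤ x) = c :: t := by
  induction a with
  | nil => simp [List.dropWhile_cons, Nat.not_le.mpr hc]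
  | cons e a ih =>
    have he : e ≤ x := ha e (by simp)
    simp only [List.cons_append, List.dropWhile_cons, decide_eq_true_eq, he, if_pos]
    exact ih (fun e he => ha e (by simp [he]))

@[simp] lemma insTab_nil (x : ℕ) : insTab x [] = [[x]] := rfl

lemma insTab_append {x : ℕ} {r : List ℕ} (rs : List (List ℕ)) (h : ∀ e ∈ r, e ≤ x) :
    insTab x (r :: rs) = (r ++ [x]) :: rs := by
  simp [insTab, dropWhile_eq_nil_of_all h]

lemma insTab_bump {x c : ℕ} {a t : List ℕ} (rs : List (List ℕ))
    (ha : ∀ e ∈ a, e ≤ x) (hc : x < c) :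
    insTab x ((a ++ c :: t) :: rs) = (a ++ x :: t) :: insTab c rs := by
  simp [insTab, dropWhile_append_cons ha hc, takeWhile_append_cons ha hc]

/-- Decompose a sorted row with respect to a threshold. -/
lemma row_split (x : ℕ) (r : List ℕ) (hr : r.Pairwise (· ≤ ·)) :
    (∀ e ∈ r, e ≤ x) ∨
      ∃ a c t, r = a ++ c :: t ∧ (∀ e ∈ a, e ≤ x) ∧ x < c := by
  by_cases h : ∀ e ∈ r, e ≤ x
  · exact Or.inl h
  · right
    have hne : r.dropWhile (· ≤ x) ≠ [] := by
      intro hnil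
      refine h fun e he => ?_
      have := List.takeWhile_append_dropWhile (p := (· ≤ x)) (l := r)
      rw [hnil, List.append_nil] at this
      rw [← this] at he
      simpa using List.mem_takeWhile_imp he
    obtain ⟨c, t, hct⟩ := List.exists_cons_of_ne_nil hne
    refine ⟨r.takeWhile (· ≤ x), c, t, ?_, ?_, ?_⟩
    · rw [← hct, List.takeWhile_append_dropWhile]
    · intro e he; simpa using List.mem_takeWhile_imp he
    · have := List.head_dropWhile_not (l := r) (p := (· ≤ x)) hne
      have hh : (List.dropWhile (fun e => decide (e ≤ x)) r).head hne = c := by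
        simp [hct]
      rw [hh] at this
      simpa using this
lemma insTab_bump' {x c : ℕ} {r a t : List ℕ} (rs : List (List ℕ)) (hr : r = a ++ c :: t)
    (ha : ∀ e ∈ a, e ≤ x) (hc : x < c) :
    insTab x (r :: rs) = (a ++ x :: t) :: insTab c rs := by
  subst hr; exact insTab_bump rs ha hc

lemma alw {l : List ℕ} {w w' : ℕ} (h : ∀ e ∈ l, e ≤ w) (hw : w ≤ w') : ∀ e ∈ l, e ≤ w' :=
  fun e he => le_trans (h e he) hw

lemma all_le_append {l₁ l₂ : List ℕ} {w : ℕ} (h1 : ∀ e ∈ l₁, e ≤ w) (h2 : ∀ e ∈ l₂, e ≤ w) :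
    ∀ e ∈ l₁ ++ l₂, e ≤ w := by
  intro e he; rcases List.mem_append.mp he with h | h
  · exact h1 e h
  · exact h2 e h

lemma all_le_cons {l : List ℕ} {c w : ℕ} (hc : c ≤ w) (h : ∀ e ∈ l, e ≤ w) :
    ∀ e ∈ c :: l, e ≤ w := by
  intro e he; rcases List.mem_cons.mp he with rfl | h'
  · exact hc
  · exact h e h'

lemma sorted_decomp {r a t : List ℕ} {c : ℕ} (hr : r.Pairwise (· ≤ ·)) (h : r = a ++ c :: t) :
    (∀ e ∈ a, e ≤ c) ∧ (∀ e ∈ t, c ≤ e) ∧ a.Pairwise (· ≤ ·) ∧ t.Pairwise (· ≤ ·) := by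
  subst h
  rw [List.pairwise_append] at hr
  obtain ⟨h1, h2, h3⟩ := hr
  rw [List.pairwise_cons] at h2
  exact ⟨fun e he => h3 e he c (by simp), h2.1, h1, h2.2⟩

/-- Rows of a tableau are sorted. -/
def RowsSorted (T : List (List ℕ)) : Prop := ∀ r ∈ T, r.Pairwise (· ≤ ·)

/-- The key commutation lemmas: elementary Knuth moves do not change the insertion tableau. -/
lemma knuth_insTab : ∀ T : List (List ℕ), RowsSorted T →
    (∀ x y z : ℕ, x ≤ y → y < z →
      insTab y (insTab z (insTab x T)) = insTab y (insTab x (insTab z T))) ∧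
    (∀ x y z : ℕ, x < y → y ≤ z →
      insTab z (insTab x (insTab y T)) = insTab x (insTab z (insTab y T))) := by
  intro T
  induction T with
  | nil =>
    intro _
    constructor
    · intro x y z h1 h2
      rw [insTab_nil, insTab_append [] (by simp; omega),
        insTab_bump' [] (show [x] ++ [z] = [x] ++ z :: [] by simp) (by simp; omega) h2,
        insTab_nil, insTab_bump' [] (show [z] = [] ++ z :: [] by simp) (by simp) (by omega),
        insTab_append (insTab z []) (by simp; omega)]
      simp
    · intro x y z h1 h2
      rw [insTab_nil, insTab_bump' [] (show [y] = [] ++ y :: [] by simp) (by simp) h1,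
        insTab_append (insTab y []) (by simp; omega),
        insTab_append [] (by simp; omega),
        insTab_bump' [] (show [y] ++ [z] = [] ++ y :: [z] by simp) (by simp) h1]
      simp
  | cons r rs IH =>
    intro hT
    have hr : r.Pairwise (· ≤ ·) := hT r (by simp)
    have hrs : RowsSorted rs := fun s hs => hT s (by simp [hs])
    obtain ⟨IH1, IH2⟩ := IH hrs
    constructor
    · -- Claim 1 : x ≤ y < z
      intro x y z hxy hyz
      rcases row_split x r hr with hall | ⟨a, c, t, hdec, ha, hxc⟩
      · -- x appends
        rw [insTab_append rs hall,
          insTab_append rs (all_le_append (alw hall (by omega)) (by simp; omega)),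
          insTab_bump' rs (show (r ++ [x]) ++ [z] = (r ++ [x]) ++ z :: [] by simp)
            (all_le_append (alw hall (by omega)) (by simp; omega)) hyz,
          insTab_append rs (alw hall (by omega)),
          insTab_bump' rs (show r ++ [z] = r ++ z :: [] by simp) hall (by omega),
          insTab_append (insTab z rs)
            (all_le_append (alw hall (by omega)) (by simp; omega))]
      · subst hdec
        obtain ⟨hac, hct, has, hts⟩ := sorted_decomp hr rfl
        by_cases hcz : c ≤ z
        · -- x bumps c, c ≤ z
          rcases row_split z t hts with htz | ⟨b, d, t₂, htd, hb, hzd⟩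
          · -- z appends on both sides
            rw [insTab_bump rs ha hxc,
              insTab_append (insTab c rs)
                (all_le_append (alw ha (by omega)) (all_le_cons (by omega) htz)),
              insTab_append rs
                (all_le_append (alw ha (by omega)) (all_le_cons hcz htz)),
              insTab_bump' rs (show (a ++ c :: t) ++ [z] = a ++ c :: (t ++ [z]) by simp)
                ha hxc]
            simp
          · subst htd
            obtain ⟨hbd, hdt₂, hbs, ht₂s⟩ := sorted_decomp hts rfl
            -- z bumps d in both orders
            rw [insTab_bump rs ha hxc,
              insTab_bump' (insTab c rs)
                (show a ++ x :: (b ++ d :: t₂) = (a ++ x :: b) ++ d :: t₂ by simp)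
                (all_le_append (alw ha (by omega)) (all_le_cons (by omega) hb)) hzd,
              insTab_bump' rs
                (show a ++ c :: (b ++ d :: t₂) = (a ++ c :: b) ++ d :: t₂ by simp)
                (all_le_append (alw ha (by omega)) (all_le_cons hcz hb)) hzd,
              insTab_bump' (insTab d rs)
                (show (a ++ c :: b) ++ z :: t₂ = a ++ c :: (b ++ z :: t₂) by simp)
                ha hxc]
            -- now insert y into row (a ++ x :: b) ++ z :: t₂ (both sides)
            rcases row_split y b hbs with hby | ⟨b₁, e, b₂, hbe, hb₁, hye⟩
            · -- y bumps z
              rw [insTab_bump' (insTab d (insTab c rs)) rfl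
                  (all_le_append (alw ha (by omega)) (all_le_cons hxy hby)) hyz,
                insTab_bump' (insTab c (insTab d rs))
                  (show a ++ x :: (b ++ z :: t₂) = (a ++ x :: b) ++ z :: t₂ by simp)
                  (all_le_append (alw ha (by omega)) (all_le_cons hxy hby)) hyz,
                IH1 c z d hcz hzd]
            · subst hbe
              have hez : e ≤ z := hb e (by simp)
              have hce : c ≤ e := hct e (by simp)
              -- y bumps e
              rw [insTab_bump' (insTab d (insTab c rs))
                  (show (a ++ x :: (b₁ ++ e :: b₂)) ++ z :: t₂
                      = (a ++ x :: b₁) ++ e :: (b₂ ++ z :: t₂) by simp)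
                  (all_le_append (alw ha (by omega)) (all_le_cons hxy hb₁)) hye,
                insTab_bump' (insTab c (insTab d rs))
                  (show a ++ x :: ((b₁ ++ e :: b₂) ++ z :: t₂)
                      = (a ++ x :: b₁) ++ e :: (b₂ ++ z :: t₂) by simp)
                  (all_le_append (alw ha (by omega)) (all_le_cons hxy hb₁)) hye,
                IH1 c e d hce (by omega)]
        · -- x bumps c, z < c
          push_neg at hcz
          rcases t with _ | ⟨c₂, t₂⟩
          · -- t = []
            rw [insTab_bump rs ha hxc,
              insTab_append (insTab c rs)
                (all_le_append (alw ha (by omega)) (by simp; omega)),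
              insTab_bump' (insTab c rs)
                (show (a ++ x :: []) ++ [z] = (a ++ [x]) ++ z :: [] by simp)
                (all_le_append (alw ha hxy) (by simp; omega)) hyz,
              insTab_bump' rs rfl
                (alw ha (by omega)) hcz,
              insTab_bump' (insTab c rs) rfl
                ha (by omega),
              insTab_append (insTab z (insTab c rs))
                (all_le_append (alw ha hxy) (by simp; omega))]
          · -- t = c₂ :: t₂
            have hcc₂ : c ≤ c₂ := hct c₂ (by simp)
            rw [insTab_bump rs ha hxc,
              insTab_bump' (insTab c rs)
                (show a ++ x :: c₂ :: t₂ = (a ++ [x]) ++ c₂ :: t₂ by simp)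
                (all_le_append (alw ha (by omega)) (by simp; omega)) (by omega),
              insTab_bump' (insTab c₂ (insTab c rs)) rfl
                (all_le_append (alw ha hxy) (by simp; omega)) hyz,
              insTab_bump' rs rfl (alw ha (by omega)) hcz,
              insTab_bump' (insTab c rs) rfl ha (by omega),
              insTab_bump' (insTab z (insTab c rs))
                (show a ++ x :: c₂ :: t₂ = (a ++ [x]) ++ c₂ :: t₂ by simp)
                (all_le_append (alw ha hxy) (by simp; omega)) (by omega),
              ← IH2 z c c₂ hcz hcc₂]

    · -- Claim 2 : x < y ≤ z
      intro x y z hxy hyz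
      rcases row_split y r hr with hall | ⟨a, e, t, hdec, ha, hye⟩
      · -- y appends
        rcases row_split x r hr with hallx | ⟨a, c, t, hdec, hax, hxc⟩
        · -- x bumps y at the end
          rw [insTab_append rs hall,
            insTab_bump' rs (show r ++ [y] = r ++ y :: [] by simp) hallx hxy,
            insTab_append (insTab y rs)
              (all_le_append (alw hallx (by omega)) (by simp; omega)),
            insTab_append rs (all_le_append (alw hall hyz) (by simp; omega)),
            insTab_bump' rs (show (r ++ [y]) ++ [z] = r ++ y :: [z] by simp) hallx hxy]
          simp
        · -- x bumps some c in r
          subst hdec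
          obtain ⟨hac, hct, has, hts⟩ := sorted_decomp hr rfl
          have hcy : c ≤ y := hall c (by simp)
          rw [insTab_append rs hall,
            insTab_bump' rs (show (a ++ c :: t) ++ [y] = a ++ c :: (t ++ [y]) by simp)
              hax hxc,
            insTab_append (insTab c rs)
              (all_le_append (alw hax (by omega))
                (all_le_cons (by omega) (all_le_append (alw (fun f hf => hall f (by simp [hf])) hyz) (by simp; omega)))),
            insTab_append rs (all_le_append (alw hall hyz) (by simp; omega)),
            insTab_bump' rs
              (show (a ++ c :: t ++ [y]) ++ [z] = a ++ c :: (t ++ [y] ++ [z]) by simp)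
              hax hxc]
          try simp
      · -- y bumps e
        subst hdec
        obtain ⟨hae, het, has, hts⟩ := sorted_decomp hr rfl
        rw [insTab_bump rs ha hye]
        rcases row_split x a has with hax | ⟨a₁, c, a₂, hac, ha₁, hxc⟩
        · -- x bumps y
          rw [insTab_bump' (insTab e rs) rfl hax hxy]
          rcases row_split z t hts with htz | ⟨b, f, t₂, htf, hb, hzf⟩
          · -- z appends
            rw [insTab_append (insTab y (insTab e rs))
                (all_le_append (alw hax (by omega)) (all_le_cons (by omega) htz)),
              insTab_append (insTab e rs)
                (all_le_append (alw ha hyz) (all_le_cons hyz htz)),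
              insTab_bump' (insTab e rs)
                (show (a ++ y :: t) ++ [z] = a ++ y :: (t ++ [z]) by simp) hax hxy]
            simp
          · subst htf
            -- z bumps f
            rw [insTab_bump' (insTab y (insTab e rs))
                (show a ++ x :: (b ++ f :: t₂) = (a ++ x :: b) ++ f :: t₂ by simp)
                (all_le_append (alw hax (by omega)) (all_le_cons (by omega) hb)) hzf,
              insTab_bump' (insTab e rs)
                (show a ++ y :: (b ++ f :: t₂) = (a ++ y :: b) ++ f :: t₂ by simp)
                (all_le_append (alw ha hyz) (all_le_cons hyz hb)) hzf,
              insTab_bump' (insTab f (insTab e rs))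
                (show (a ++ y :: b) ++ z :: t₂ = a ++ y :: (b ++ z :: t₂) by simp)
                hax hxy]
            have hef : e ≤ f := het f (by simp)
            rw [IH2 y e f hye hef]
            simp
        · -- x bumps c inside a
          subst hac
          have hcy : c ≤ y := ha c (by simp)
          rw [insTab_bump' (insTab e rs)
              (show (a₁ ++ c :: a₂) ++ y :: t = a₁ ++ c :: (a₂ ++ y :: t) by simp)
              ha₁ hxc]
          rcases row_split z t hts with htz | ⟨b, f, t₂, htf, hb, hzf⟩
          · -- z appends
            rw [insTab_append (insTab c (insTab e rs))
                (all_le_append (alw ha₁ (by omega))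
                  (all_le_cons (by omega)
                    (all_le_append (alw (fun g hg => ha g (by simp [hg])) hyz)
                      (all_le_cons hyz htz)))),
              insTab_append (insTab e rs)
                (all_le_append (alw ha hyz) (all_le_cons hyz htz)),
              insTab_bump' (insTab e rs)
                (show (a₁ ++ c :: a₂ ++ y :: t) ++ [z] = a₁ ++ c :: (a₂ ++ y :: (t ++ [z])) by simp)
                ha₁ hxc]
            simp
          · subst htf
            have hef : e ≤ f := het f (by simp)
            rw [insTab_bump' (insTab c (insTab e rs))
                (show a₁ ++ x :: (a₂ ++ y :: (b ++ f :: t₂))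
                    = (a₁ ++ x :: (a₂ ++ y :: b)) ++ f :: t₂ by simp)
                (all_le_append (alw ha₁ (by omega))
                  (all_le_cons (by omega)
                    (all_le_append (alw (fun g hg => ha g (by simp [hg])) hyz)
                      (all_le_cons hyz hb)))) hzf,
              insTab_bump' (insTab e rs)
                (show (a₁ ++ c :: a₂) ++ y :: (b ++ f :: t₂)
                    = (a₁ ++ c :: a₂ ++ y :: b) ++ f :: t₂ by simp)
                (all_le_append (alw ha hyz) (all_le_cons hyz hb)) hzf,
              insTab_bump' (insTab f (insTab e rs))
                (show (a₁ ++ c :: a₂ ++ y :: b) ++ z :: t₂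
                    = a₁ ++ c :: (a₂ ++ y :: (b ++ z :: t₂)) by simp)
                ha₁ hxc,
              IH2 c e f (by omega) hef]
            try simp
lemma sorted_append_singleton {r : List ℕ} {x : ℕ} (hr : r.Pairwise (· ≤ ·))
    (h : ∀ e ∈ r, e ≤ x) : (r ++ [x]).Pairwise (· ≤ ·) := by
  rw [List.pairwise_append]
  exact ⟨hr, by simp, fun e he f hf => by simp at hf; subst hf; exact h e he⟩

lemma sorted_bump {a t : List ℕ} {c x : ℕ} (hr : (a ++ c :: t).Pairwise (· ≤ ·))
    (ha : ∀ e ∈ a, e ≤ x) (hc : x < c) : (a ++ x :: t).Pairwise (· ≤ ·) := by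
  obtain ⟨hac, hct, has, hts⟩ := sorted_decomp hr rfl
  rw [List.pairwise_append]
  refine ⟨has, ?_, ?_⟩
  · rw [List.pairwise_cons]
    exact ⟨fun f hf => le_trans (le_of_lt hc) (hct f hf), hts⟩
  · intro e he f hf
    rcases List.mem_cons.mp hf with rfl | hf'
    · exact ha e he
    · exact le_trans (hac e he) (hct f hf')

lemma rowsSorted_insTab {T : List (List ℕ)} (hT : RowsSorted T) (x : ℕ) :
    RowsSorted (insTab x T) := by
  induction T generalizing x with
  | nil =>
    intro r hr; simp at hr; subst hr; simp
  | cons r rs IH =>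
    have hr : r.Pairwise (· ≤ ·) := hT r (by simp)
    have hrs : RowsSorted rs := fun s hs => hT s (by simp [hs])
    rcases row_split x r hr with hall | ⟨a, c, t, hdec, ha, hxc⟩
    · rw [insTab_append rs hall]
      intro s hs
      rcases List.mem_cons.mp hs with rfl | hs'
      · exact sorted_append_singleton hr hall
      · exact hrs s hs'
    · subst hdec
      rw [insTab_bump rs ha hxc]
      intro s hs
      rcases List.mem_cons.mp hs with rfl | hs'
      · exact sorted_bump hr ha hxc
      · exact IH hrs c s hs'

lemma rowsSorted_nil : RowsSorted [] := fun r hr => by simp at hr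

lemma rowsSorted_foldl {T : List (List ℕ)} (hT : RowsSorted T) (w : List ℕ) :
    RowsSorted (w.foldl (fun T x => insTab x T) T) := by
  induction w generalizing T with
  | nil => exact hT
  | cons x w IH => exact IH (rowsSorted_insTab hT x)

lemma rowsSorted_PTab (w : List ℕ) : RowsSorted (PTab w) :=
  rowsSorted_foldl rowsSorted_nil w

lemma PTab_eq_of_knuthRel {v v' : List ℕ} (h : KnuthRel v v') : PTab v = PTab v' := by
  cases h with
  | elem1 u w x y z h1 h2 =>
    show List.foldl _ [] _ = List.foldl _ [] _
    rw [List.foldl_append, List.foldl_append, List.foldl_append, List.foldl_append]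
    congr 1
    simpa using (knuth_insTab _ (rowsSorted_foldl rowsSorted_nil u)).1 x y z h1 h2
  | elem2 u w x y z h1 h2 =>
    show List.foldl _ [] _ = List.foldl _ [] _
    rw [List.foldl_append, List.foldl_append, List.foldl_append, List.foldl_append]
    congr 1
    simpa using (knuth_insTab _ (rowsSorted_foldl rowsSorted_nil u)).2 x y z h1 h2

lemma PTab_eq_of_knuthEquiv {v v' : List ℕ} (h : KnuthEquiv v v') : PTab v = PTab v' := by
  induction h with
  | rel _ _ h => exact PTab_eq_of_knuthRel h
  | refl _ => rfl
  | symm _ _ _ ih => exact ih.symm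
  | trans _ _ _ _ _ ih1 ih2 => exact ih1.trans ih2

lemma KnuthEquiv.refl (w : List ℕ) : KnuthEquiv w w := Relation.EqvGen.refl w
lemma KnuthEquiv.symm {v w : List ℕ} (h : KnuthEquiv v w) : KnuthEquiv w v :=
  Relation.EqvGen.symm _ _ h
lemma KnuthEquiv.trans {u v w : List ℕ} (h1 : KnuthEquiv u v) (h2 : KnuthEquiv v w) :
    KnuthEquiv u w := Relation.EqvGen.trans _ _ _ h1 h2

lemma KnuthRel.ctx {w w' : List ℕ} (p q : List ℕ) (h : KnuthRel w w') :
    KnuthRel (p ++ w ++ q) (p ++ w' ++ q) := by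
  cases h with
  | elem1 u v x y z h1 h2 =>
    have := KnuthRel.elem1 (p ++ u) (v ++ q) x y z h1 h2
    simpa using this
  | elem2 u v x y z h1 h2 =>
    have := KnuthRel.elem2 (p ++ u) (v ++ q) x y z h1 h2
    simpa using this

lemma KnuthEquiv.ctx {w w' : List ℕ} (p q : List ℕ) (h : KnuthEquiv w w') :
    KnuthEquiv (p ++ w ++ q) (p ++ w' ++ q) := by
  induction h with
  | rel _ _ h => exact Relation.EqvGen.rel _ _ (h.ctx p q)
  | refl _ => exact KnuthEquiv.refl _
  | symm _ _ _ ih => exact ih.symm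
  | trans _ _ _ _ _ ih1 ih2 => exact ih1.trans ih2

lemma ke_row1 {c x : ℕ} (t : List ℕ) (hts : t.Pairwise (· ≤ ·)) (hct : ∀ e ∈ t, c ≤ e)
    (hxc : x < c) : KnuthEquiv (c :: (t ++ [x])) (c :: x :: t) := by
  induction t generalizing c with
  | nil => exact KnuthEquiv.refl _
  | cons u t' IH =>
    have hcu : c ≤ u := hct u (by simp)
    have h1 : KnuthEquiv (u :: (t' ++ [x])) (u :: x :: t') :=
      IH (List.Pairwise.of_cons hts) (fun e he => List.rel_of_pairwise_cons hts he) (by omega)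
    have h2 : KnuthEquiv (c :: u :: (t' ++ [x])) (c :: u :: x :: t') := by
      have := h1.ctx [c] []
      simpa using this
    refine h2.trans (KnuthEquiv.symm ?_)
    have := KnuthRel.elem2 [] t' x c u hxc hcu
    exact Relation.EqvGen.rel _ _ (by simpa using this)

lemma ke_row2 {c x : ℕ} (t : List ℕ) : ∀ a : List ℕ, a.Pairwise (· ≤ ·) →
    (∀ e ∈ a, e ≤ x) → x < c → KnuthEquiv (a ++ c :: x :: t) (c :: (a ++ x :: t)) := by
  intro a
  induction a with
  | nil => intro _ _ _; exact KnuthEquiv.refl _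
  | cons e a' IH =>
    intro has ha hxc
    have h1 : KnuthEquiv (a' ++ c :: x :: t) (c :: (a' ++ x :: t)) :=
      IH (List.Pairwise.of_cons has) (fun f hf => ha f (by simp [hf])) hxc
    have h2 : KnuthEquiv (e :: (a' ++ c :: x :: t)) (e :: c :: (a' ++ x :: t)) := by
      have := h1.ctx [e] []
      simpa using this
    refine h2.trans ?_
    obtain ⟨f, rest, hfr, hef, hfc⟩ :
        ∃ f rest, a' ++ x :: t = f :: rest ∧ e ≤ f ∧ f < c := by
      cases a' with
      | nil => exact ⟨x, t, rfl, ha e (by simp), hxc⟩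
      | cons f a'' =>
        refine ⟨f, a'' ++ x :: t, rfl, List.rel_of_pairwise_cons has (by simp), ?_⟩
        have := ha f (by simp)
        omega
    rw [hfr, show (e :: a' ++ x :: t : List ℕ) = e :: f :: rest by simp [hfr]]
    have := KnuthRel.elem1 [] rest e f c hef hfc
    exact Relation.EqvGen.rel _ _ (by simpa using this)

lemma ke_row {a t : List ℕ} {c x : ℕ} (hr : (a ++ c :: t).Pairwise (· ≤ ·))
    (ha : ∀ e ∈ a, e ≤ x) (hxc : x < c) :
    KnuthEquiv ((a ++ c :: t) ++ [x]) (c :: (a ++ x :: t)) := by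
  obtain ⟨hac, hct, has, hts⟩ := sorted_decomp hr rfl
  have h1 : KnuthEquiv (c :: (t ++ [x])) (c :: x :: t) := ke_row1 t hts hct hxc
  have h2 : KnuthEquiv (a ++ (c :: (t ++ [x])) ++ []) (a ++ (c :: x :: t) ++ []) :=
    h1.ctx a []
  have h3 : KnuthEquiv (a ++ c :: x :: t) (c :: (a ++ x :: t)) := ke_row2 t a has ha hxc
  refine KnuthEquiv.trans ?_ h3
  simpa using h2

@[simp] lemma readTab_nil : readTab [] = [] := rfl

lemma readTab_cons (r : List ℕ) (rs : List (List ℕ)) :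
    readTab (r :: rs) = readTab rs ++ r := by
  simp [readTab]

lemma ke_read_insTab {T : List (List ℕ)} (hT : RowsSorted T) (x : ℕ) :
    KnuthEquiv (readTab T ++ [x]) (readTab (insTab x T)) := by
  induction T generalizing x with
  | nil => simpa [readTab] using KnuthEquiv.refl [x]
  | cons r rs IH =>
    have hr : r.Pairwise (· ≤ ·) := hT r (by simp)
    have hrs : RowsSorted rs := fun s hs => hT s (by simp [hs])
    rcases row_split x r hr with hall | ⟨a, c, t, hdec, ha, hxc⟩
    · rw [insTab_append rs hall, readTab_cons, readTab_cons]
      simpa using KnuthEquiv.refl (readTab rs ++ r ++ [x])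
    · subst hdec
      rw [insTab_bump rs ha hxc, readTab_cons, readTab_cons]
      have h1 : KnuthEquiv (readTab rs ++ ((a ++ c :: t) ++ [x]) ++ [])
          (readTab rs ++ (c :: (a ++ x :: t)) ++ []) :=
        (ke_row hr ha hxc).ctx (readTab rs) []
      have h2 : KnuthEquiv ((readTab rs ++ [c]) ++ (a ++ x :: t))
          ((readTab (insTab c rs)) ++ (a ++ x :: t)) := by
        have := (IH hrs c).ctx [] (a ++ x :: t)
        simpa using this
      refine KnuthEquiv.trans ?_ h2
      simpa [List.append_assoc] using h1

lemma ke_PTab (w : List ℕ) : KnuthEquiv w (readTab (PTab w)) := by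
  induction w using List.reverseRecOn with
  | nil => exact KnuthEquiv.refl []
  | append_singleton w x IH =>
    have h1 : PTab (w ++ [x]) = insTab x (PTab w) := by
      simp [PTab, List.foldl_append]
    rw [h1]
    have h2 : KnuthEquiv (w ++ [x]) (readTab (PTab w) ++ [x]) := by
      have := IH.ctx [] [x]
      simpa using this
    exact h2.trans (ke_read_insTab (rowsSorted_PTab w) x)
/-- Column-strict domination of row `s` (below) by row `r` (above). -/
def Dom (r s : List ℕ) : Prop :=
  s.length ≤ r.length ∧ ∀ j < s.length, r.getD j 0 < s.getD j 0

/-- A valid tableau: nonempty sorted rows, consecutive rows dominate. -/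
def ValidTab (T : List (List ℕ)) : Prop :=
  (∀ r ∈ T, r ≠ [] ∧ r.Pairwise (· ≤ ·)) ∧ List.IsChain Dom T

lemma getD_mem {l : List ℕ} {j : ℕ} (h : j < l.length) : l.getD j 0 ∈ l := by
  rw [List.getD_eq_getElem _ _ h]; exact List.getElem_mem h

lemma getD_mid {a t : List ℕ} (x : ℕ) : (a ++ x :: t).getD a.length 0 = x := by
  rw [List.getD_append_right _ _ _ _ le_rfl]; simp

lemma getD_mid_ne {a t : List ℕ} (x c : ℕ) {j : ℕ} (h : j ≠ a.length) :
    (a ++ x :: t).getD j 0 = (a ++ c :: t).getD j 0 := by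
  rcases Nat.lt_or_ge j a.length with hj | hj
  · rw [List.getD_append _ _ _ _ hj, List.getD_append _ _ _ _ hj]
  · have hj' : a.length < j := lt_of_le_of_ne hj (Ne.symm h)
    rw [List.getD_append_right _ _ _ _ hj, List.getD_append_right _ _ _ _ hj]
    obtain ⟨k, hk⟩ : ∃ k, j - a.length = k + 1 := ⟨j - a.length - 1, by omega⟩
    rw [hk, List.getD_cons_succ, List.getD_cons_succ]

lemma getD_le_of_all_le {l : List ℕ} {w : ℕ} (h : ∀ e ∈ l, e ≤ w) {j : ℕ}
    (hj : j < l.length) : l.getD j 0 ≤ w := h _ (getD_mem hj)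

lemma dom_append_right {r s : List ℕ} (x : ℕ) (hdom : Dom r s) : Dom (r ++ [x]) s := by
  obtain ⟨h1, h2⟩ := hdom
  refine ⟨by simp; omega, fun j hj => ?_⟩
  rw [List.getD_append _ _ _ _ (by omega)]
  exact h2 j hj

lemma dom_insert_append {a t s : List ℕ} {c x : ℕ}
    (hdom : Dom (a ++ c :: t) s) (ha : ∀ e ∈ a, e ≤ x) (hxc : x < c)
    (hs : ∀ e ∈ s, e ≤ c) : Dom (a ++ x :: t) (s ++ [c]) := by
  obtain ⟨h1, h2⟩ := hdom
  have hsa : s.length ≤ a.length := by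
    by_contra hlt
    push_neg at hlt
    have := h2 a.length hlt
    rw [getD_mid] at this
    exact absurd (getD_le_of_all_le hs hlt) (by omega)
  refine ⟨by simp at h1 ⊢; omega, fun j hj => ?_⟩
  simp only [List.length_append, List.length_cons, List.length_nil] at hj
  rcases Nat.lt_or_ge j s.length with hjs | hjs
  · rw [List.getD_append _ _ _ _ hjs, getD_mid_ne x c (by omega)]
    exact h2 j hjs
  · have hj' : j = s.length := by omega
    subst hj'
    rw [getD_mid]
    rcases Nat.lt_or_ge s.length a.length with hja | hja
    · rw [List.getD_append _ _ _ _ hja]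
      have := getD_le_of_all_le ha hja
      omega
    · have heq : s.length = a.length := by omega
      rw [heq, getD_mid (t := t) x]
      exact hxc

lemma dom_insert_bump {a t b u : List ℕ} {c x d : ℕ}
    (hdom : Dom (a ++ c :: t) (b ++ d :: u)) (ha : ∀ e ∈ a, e ≤ x) (hxc : x < c)
    (hb : ∀ e ∈ b, e ≤ c) (hcd : c < d) : Dom (a ++ x :: t) (b ++ c :: u) := by
  obtain ⟨h1, h2⟩ := hdom
  have hba : b.length ≤ a.length := by
    by_contra hlt
    push_neg at hlt
    have h3 := h2 a.length (by simp; simp at h1; omega)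
    rw [getD_mid, List.getD_append _ _ _ _ hlt] at h3
    exact absurd (getD_le_of_all_le hb hlt) (by omega)
  refine ⟨by simpa using h1, fun j hj => ?_⟩
  simp only [List.length_append, List.length_cons, List.length_nil] at hj
  rcases Nat.lt_or_ge j b.length with hjb | hjb
  · rw [List.getD_append _ _ _ _ hjb, getD_mid_ne x c (by omega),
      ← List.getD_append b (d :: u) 0 j hjb]
    exact h2 j (by simp; omega)
  · rcases Nat.eq_or_lt_of_le hjb with hjb' | hjb'
    · subst hjb'
      rw [getD_mid]
      rcases Nat.lt_or_ge b.length a.length with hja | hja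
      · rw [List.getD_append _ _ _ _ hja]
        have := getD_le_of_all_le ha hja
        omega
      · have heq : b.length = a.length := by omega
        rw [heq, getD_mid (t := t) x]
        exact hxc
    · -- j > |b| : both sides unchanged, except possibly j = |a| on the left
      have hrj : (b ++ c :: u).getD j 0 = (b ++ d :: u).getD j 0 :=
        getD_mid_ne c d (by omega)
      rw [hrj]
      by_cases hja : j = a.length
      · subst hja
        rw [getD_mid]
        have h3 := h2 a.length (by simp; omega)
        rw [getD_mid] at h3
        omega
      · rw [getD_mid_ne x c hja]
        exact h2 j (by simp; omega)

lemma validTab_insTab {T : List (List ℕ)} (hT : ValidTab T) (x : ℕ) :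
    ValidTab (insTab x T) := by
  induction T generalizing x with
  | nil =>
    refine ⟨?_, ?_⟩ <;> simp [ValidTab]
  | cons r rs IH =>
    obtain ⟨hrows, hchain⟩ := hT
    have hr : r.Pairwise (· ≤ ·) := (hrows r (by simp)).2
    have hrs : ValidTab rs :=
      ⟨fun s hs => hrows s (by simp [hs]), hchain.tail⟩
    rcases row_split x r hr with hall | ⟨a, c, t, hdec, ha, hxc⟩
    · rw [insTab_append rs hall]
      refine ⟨?_, ?_⟩
      · intro s hs
        rcases List.mem_cons.mp hs with rfl | hs'
        · exact ⟨by simp, sorted_append_singleton hr hall⟩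
        · exact hrows s (by simp [hs'])
      · cases rs with
        | nil => simp
        | cons s U =>
          have hdom : Dom r s := List.isChain_cons_cons.mp hchain |>.1
          exact List.isChain_cons_cons.mpr ⟨dom_append_right x hdom, hchain.tail⟩
    · subst hdec
      rw [insTab_bump rs ha hxc]
      obtain ⟨hrows', hchain'⟩ := IH hrs c
      refine ⟨?_, ?_⟩
      · intro s hs
        rcases List.mem_cons.mp hs with rfl | hs'
        · refine ⟨by simp, sorted_bump hr ha hxc⟩
        · exact hrows' s hs'
      · -- chain: Dom (a ++ x :: t) (head of insTab c rs)
        cases rs with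
        | nil =>
          refine List.isChain_cons_cons.mpr ⟨⟨by simp; omega, ?_⟩, by simp⟩
          intro j hj
          simp at hj
          subst hj
          simp only [List.getD_cons_zero]
          cases a with
          | nil => simpa using hxc
          | cons a₀ a' =>
            simp only [List.cons_append, List.getD_cons_zero]
            have := ha a₀ (by simp)
            omega
        | cons s U =>
          have hdom : Dom (a ++ c :: t) s := List.isChain_cons_cons.mp hchain |>.1
          have hss : s.Pairwise (· ≤ ·) := (hrows s (by simp)).2
          rcases row_split c s hss with hsall | ⟨b, d, u, hsdec, hb, hcd⟩
          · rw [insTab_append U hsall] at hchain' ⊢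
            exact List.isChain_cons_cons.mpr ⟨dom_insert_append hdom ha hxc hsall, hchain'⟩
          · subst hsdec
            rw [insTab_bump U hb hcd] at hchain' ⊢
            exact List.isChain_cons_cons.mpr ⟨dom_insert_bump hdom ha hxc hb hcd, hchain'⟩
/-- Fold insertion of a word into a tableau. -/
def foldIns (u : List ℕ) (T : List (List ℕ)) : List (List ℕ) :=
  u.foldl (fun T x => insTab x T) T

@[simp] lemma foldIns_nil (T : List (List ℕ)) : foldIns [] T = T := rfl

lemma foldIns_cons (x : ℕ) (u : List ℕ) (T : List (List ℕ)) :
    foldIns (x :: u) T = foldIns u (insTab x T) := rfl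

lemma foldIns_top_row : ∀ (u : List ℕ), u.Pairwise (· ≤ ·) → ∀ (t : List ℕ) (U : List (List ℕ)),
    (∀ e ∈ t, ∀ f ∈ u, e ≤ f) → foldIns u (t :: U) = (t ++ u) :: U := by
  intro u
  induction u with
  | nil => intro _ t U _; simp
  | cons x u' IH =>
    intro hu t U h
    rw [foldIns_cons, insTab_append U (fun e he => h e he x (by simp)),
      IH (List.Pairwise.of_cons hu) (t ++ [x]) U ?_]
    · simp
    · intro e he f hf
      rcases List.mem_append.mp he with he' | he'
      · exact h e he' f (by simp [hf])
      · simp at he'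
        subst he'
        exact List.rel_of_pairwise_cons hu hf

lemma foldIns_single_row {u : List ℕ} (hu : u.Pairwise (· ≤ ·)) (hne : u ≠ []) :
    foldIns u [] = [u] := by
  cases u with
  | nil => exact absurd rfl hne
  | cons x u' =>
    rw [foldIns_cons, insTab_nil,
      foldIns_top_row u' (List.Pairwise.of_cons hu) [x] []
        (by intro e he f hf; simp at he; subst he; exact List.rel_of_pairwise_cons hu hf)]
    simp

lemma foldIns_step : ∀ (u : List ℕ), u.Pairwise (· ≤ ·) → ∀ (s a : List ℕ) (U : List (List ℕ)),
    s.length ≤ u.length → (∀ j < s.length, u.getD j 0 < s.getD j 0) →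
    (∀ e ∈ a, ∀ f ∈ u, e ≤ f) →
    foldIns u ((a ++ s) :: U) = (a ++ u) :: foldIns s U := by
  intro u
  induction u with
  | nil =>
    intro _ s a U hlen _ _
    have : s = [] := List.eq_nil_of_length_eq_zero (by simpa using hlen)
    subst this
    simp
  | cons x u' IH =>
    intro hu s a U hlen hdom h
    cases s with
    | nil =>
      rw [List.append_nil, foldIns_cons,
        insTab_append U (fun e he => h e he x (by simp)),
        foldIns_top_row u' (List.Pairwise.of_cons hu) (a ++ [x]) U ?_]
      · simp
      · intro e he f hf
        rcases List.mem_append.mp he with he' | he'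
        · exact h e he' f (by simp [hf])
        · simp at he'; subst he'
          exact List.rel_of_pairwise_cons hu hf
    | cons s₀ s' =>
      have hx : x < s₀ := by
        have := hdom 0 (by simp)
        simpa using this
      rw [foldIns_cons,
        insTab_bump' U rfl (fun e he => h e he x (by simp)) hx,
        show a ++ x :: s' = (a ++ [x]) ++ s' by simp,
        IH (List.Pairwise.of_cons hu) s' (a ++ [x]) (insTab s₀ U) (by simp at hlen ⊢; omega)
          ?_ ?_]
      · rw [foldIns_cons]
        simp
      · intro j hj
        have := hdom (j + 1) (by simp; omega)
        simpa using this
      · intro e he f hf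
        rcases List.mem_append.mp he with he' | he'
        · exact h e he' f (by simp [hf])
        · simp at he'; subst he'
          exact List.rel_of_pairwise_cons hu hf

lemma foldIns_push : ∀ (T : List (List ℕ)) (r : List ℕ), ValidTab (r :: T) →
    foldIns r T = r :: T := by
  intro T
  induction T with
  | nil =>
    intro r hv
    exact foldIns_single_row (hv.1 r (by simp)).2 (hv.1 r (by simp)).1
  | cons s U IH =>
    intro r hv
    obtain ⟨hrows, hchain⟩ := hv
    have hdom : Dom r s := List.isChain_cons_cons.mp hchain |>.1
    have h1 : foldIns r (s :: U) = r :: foldIns s U := by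
      have := foldIns_step r (hrows r (by simp)).2 s [] U hdom.1 hdom.2 (by simp)
      simpa using this
    rw [h1, IH s ⟨fun q hq => hrows q (by simp [hq]), hchain.tail⟩]

lemma PTab_readTab {T : List (List ℕ)} (hT : ValidTab T) : PTab (readTab T) = T := by
  induction T with
  | nil => rfl
  | cons r T IH =>
    rw [readTab_cons]
    have h1 : PTab (readTab T ++ r) = foldIns r (PTab (readTab T)) := by
      simp [PTab, foldIns, List.foldl_append]
    rw [h1, IH ⟨fun q hq => hT.1 q (by simp [hq]), hT.2.tail⟩, foldIns_push T r hT]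

lemma validTab_PTab (w : List ℕ) : ValidTab (PTab w) := by
  have : ∀ (w : List ℕ) (T : List (List ℕ)), ValidTab T →
      ValidTab (w.foldl (fun T x => insTab x T) T) := by
    intro w
    induction w with
    | nil => intro T hT; exact hT
    | cons x w IH => intro T hT; exact IH _ (validTab_insTab hT x)
  exact this w [] ⟨by simp, by simp⟩
lemma getD_map_range {α : Type*} (d : α) (l : List α) :
    (List.range l.length).map (fun j => l.getD j d) = l := by
  refine List.ext_getElem (by simp) fun n h1 h2 => ?_
  simp only [List.getElem_map, List.getElem_range]
  rw [List.getD_eq_getElem _ _ h2]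

lemma getD_mem' {α : Type*} {l : List α} {j : ℕ} (h : j < l.length) (d : α) :
    l.getD j d ∈ l := by
  rw [List.getD_eq_getElem _ _ h]; exact List.getElem_mem h

lemma getD_map_range_lt {g : ℕ → ℕ} {m j : ℕ} (h : j < m) :
    ((List.range m).map g).getD j 0 = g j := by
  rw [List.getD_eq_getElem _ _ (by simpa using h)]
  simp

lemma sorted_getD_le {l : List ℕ} (h : l.Pairwise (· ≤ ·)) {j1 j2 : ℕ} (hj : j1 ≤ j2)
    (h2 : j2 < l.length) : l.getD j1 0 ≤ l.getD j2 0 := by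
  rcases Nat.eq_or_lt_of_le hj with rfl | hj'
  · rfl
  · rw [List.getD_eq_getElem _ _ (lt_trans hj' h2), List.getD_eq_getElem _ _ h2]
    exact List.pairwise_iff_get.mp h ⟨j1, lt_trans hj' h2⟩ ⟨j2, h2⟩ hj'

/-- The list-of-rows form of a semistandard Young tableau. -/
def toListTab (μ : YoungDiagram) (T : SemistandardYoungTableau μ) : List (List ℕ) :=
  (List.range (μ.colLen 0)).map fun i => (List.range (μ.rowLen i)).map fun j => T i j

lemma readTab_toListTab (μ : YoungDiagram) (T : SemistandardYoungTableau μ) :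
    readTab (toListTab μ T) = readingWord μ T := by
  rw [readTab, toListTab, readingWord, ← List.map_reverse, List.flatMap_map]
  rfl

lemma validTab_toListTab (μ : YoungDiagram) (T : SemistandardYoungTableau μ) :
    ValidTab (toListTab μ T) := by
  constructor
  · intro r hr
    rw [toListTab] at hr
    obtain ⟨i, hi, rfl⟩ := List.mem_map.mp hr
    rw [List.mem_range] at hi
    constructor
    · have h0 : 0 < μ.rowLen i := by
        rw [← YoungDiagram.mem_iff_lt_rowLen]
        rw [← YoungDiagram.mem_iff_lt_colLen] at hi
        exact hi
      simp [List.range_eq_nil]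
      omega
    · rw [List.pairwise_map]
      refine List.Pairwise.imp_of_mem ?_ List.pairwise_lt_range
      intro j1 j2 hj1 hj2 hlt
      exact T.row_weak hlt (YoungDiagram.mem_iff_lt_rowLen.mpr (List.mem_range.mp hj2))
  · rw [toListTab, List.isChain_map]
    rw [List.isChain_iff_getElem]
    intro i hi
    simp only [List.length_range] at hi
    simp only [List.get_eq_getElem, List.getElem_range]
    have hi1 : i + 1 < μ.colLen 0 := by omega
    constructor
    · simp only [List.length_map, List.length_range]
      exact μ.rowLen_anti i (i + 1) (by omega)
    · intro j hj
      simp only [List.length_map, List.length_range] at hj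
      rw [getD_map_range_lt hj,
        getD_map_range_lt (lt_of_lt_of_le hj (μ.rowLen_anti i (i + 1) (by omega)))]
      exact T.col_strict (by omega) (YoungDiagram.mem_iff_lt_rowLen.mpr hj)

/-- From a valid list tableau to a semistandard Young tableau. -/
lemma exists_ssyt_of_validTab {L : List (List ℕ)} (hL : ValidTab L) :
    ∃ (μ : YoungDiagram) (T : SemistandardYoungTableau μ), readingWord μ T = readTab L := by
  obtain ⟨hrows, hchain⟩ := hL
  have hDomTrans : Transitive Dom := by
    intro a b c hab hbc
    exact ⟨le_trans hbc.1 hab.1, fun j hj =>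
      lt_trans (hab.2 j (lt_of_lt_of_le hj hbc.1)) (hbc.2 j hj)⟩
  haveI : IsTrans (List ℕ) Dom := ⟨fun a b c hab hbc => hDomTrans hab hbc⟩
  have hpair : L.Pairwise Dom := List.isChain_iff_pairwise.mp hchain
  have hsorted : (L.map List.length).Pairwise (· ≥ ·) := by
    rw [List.pairwise_map]
    exact hpair.imp fun h => h.1
  have hpos : ∀ x ∈ L.map List.length, 0 < x := by
    intro x hx
    obtain ⟨r, hr, rfl⟩ := List.mem_map.mp hx
    exact List.length_pos_iff.mpr (hrows r hr).1
  set μ := YoungDiagram.ofRowLens _ hsorted.sortedGE with hμ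
  have hcol : μ.colLen 0 = L.length := by
    rw [← YoungDiagram.length_rowLens, YoungDiagram.rowLens_ofRowLens_eq_self hpos]
    simp
  have hrowLen : ∀ i, i < L.length → μ.rowLen i = (L.getD i []).length := by
    intro i hi
    have h := YoungDiagram.rowLen_ofRowLens (w := L.map List.length) (hw := hsorted.sortedGE)
      ⟨i, by simpa using hi⟩
    rw [List.getD_eq_getElem _ _ hi]
    simpa using h
  have hmem : ∀ i j, (i, j) ∈ μ ↔ i < L.length ∧ j < (L.getD i []).length := by
    intro i j
    rw [hμ, YoungDiagram.mem_ofRowLens]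
    constructor
    · rintro ⟨h, h2⟩
      simp only [List.length_map] at h
      refine ⟨h, ?_⟩
      rw [List.getElem_map] at h2
      rwa [List.getD_eq_getElem _ _ h]
    · rintro ⟨h, h2⟩
      refine ⟨by simpa using h, ?_⟩
      rw [List.getElem_map]
      rwa [List.getD_eq_getElem _ _ h] at h2
  refine ⟨μ, ⟨fun i j => (L.getD i []).getD j 0, ?_, ?_, ?_⟩, ?_⟩
  · -- row_weak'
    intro i j1 j2 hj hcell
    obtain ⟨hi, hj2⟩ := (hmem i j2).mp hcell
    exact sorted_getD_le (hrows _ (getD_mem' hi [])).2 (le_of_lt hj) hj2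
  · -- col_strict'
    intro i1 i2 j hi hcell
    obtain ⟨hi2, hj⟩ := (hmem i2 j).mp hcell
    have hdom : Dom (L.getD i1 []) (L.getD i2 []) := by
      have := List.pairwise_iff_get.mp hpair ⟨i1, lt_trans hi hi2⟩ ⟨i2, hi2⟩ hi
      simp only [List.get_eq_getElem] at this
      rwa [List.getD_eq_getElem _ _ (lt_trans hi hi2), List.getD_eq_getElem _ _ hi2]
    exact hdom.2 j hj
  · -- zeros'
    intro i j hcell
    rw [hmem] at hcell
    push_neg at hcell
    rcases Nat.lt_or_ge i L.length with hi | hi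
    · exact List.getD_eq_default _ _ (hcell hi)
    · have h0 : L.getD i [] = [] := List.getD_eq_default _ _ hi
      show (L.getD i []).getD j 0 = 0
      rw [h0]
      rfl
  · -- reading word
    show ((List.range (μ.colLen 0)).reverse).flatMap
        (fun i => (List.range (μ.rowLen i)).map fun j => (L.getD i []).getD j 0) = readTab L
    rw [hcol]
    have h1 : ∀ i ∈ (List.range L.length).reverse,
        ((List.range (μ.rowLen i)).map fun j => (L.getD i []).getD j 0) = L.getD i [] := by
      intro i hi
      rw [List.mem_reverse, List.mem_range] at hi
      rw [hrowLen i hi, getD_map_range]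
    rw [List.flatMap_congr (l := (List.range L.length).reverse)
      (f := fun i => (List.range (μ.rowLen i)).map fun j => (L.getD i []).getD j 0)
      (g := fun i => L.getD i []) h1]
    rw [readTab]
    have h2 : L.reverse = ((List.range L.length).map fun i => L.getD i []).reverse := by
      rw [getD_map_range]
    rw [h2, ← List.map_reverse, List.flatMap_map]
    simp
/-- Every Knuth equivalence class of words over the alphabet `{1, …, n}` contains exactly one
word that is the row-reading word of a semistandard Young tableau of normal (partition)
shape. -/
theorem knuth_class_unique_tableau_word (n : ℕ) (w : List ℕ)
    (hw : ∀ x ∈ w, 1 ≤ x ∧ x ≤ n) :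
    ∃! w' : List ℕ, KnuthEquiv w w' ∧
      ∃ (μ : YoungDiagram) (T : SemistandardYoungTableau μ), readingWord μ T = w' := by
  refine ⟨readTab (PTab w), ⟨ke_PTab w, exists_ssyt_of_validTab (validTab_PTab w)⟩, ?_⟩
  rintro w'' ⟨hke, μ, T, hread⟩
  have hL : ValidTab (toListTab μ T) := validTab_toListTab μ T
  have h1 : readTab (toListTab μ T) = w'' := by rw [readTab_toListTab, hread]
  have h2 : PTab w'' = toListTab μ T := by rw [← h1, PTab_readTab hL]
  have h3 : PTab w = PTab w'' := PTab_eq_of_knuthEquiv hke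
  rw [← h1, ← h2, ← h3]
end

section
/- For a key tableau K (a semistandard tableau each of whose columns, viewed as a set, contains each column to its right), K is the unique semistandard tableau of its shape with its weight; that is, for any weight vector β ∈ ℕⁿ, there is exactly one semistandard tableau of shape β⁺ (the decreasing rearrangement of β) and weight β, namely the key tableau 𝕂_β. -/
/-- The entries of the `c`-th column of the key tableau of weight `β`. -/
def keyCol (n : ℕ) (β : Fin n → ℕ) (c : ℕ) : Finset ℕ :=
  (Finset.univ.filter fun i : Fin n => c < β i).image fun i : Fin n => (i : ℕ) + 1

lemma mem_keyCol {n : ℕ} {β : Fin n → ℕ} {c : ℕ} {i : Fin n} :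
    (i : ℕ) + 1 ∈ keyCol n β c ↔ c < β i := by
  simp only [keyCol, Finset.mem_image, Finset.mem_filter, Finset.mem_univ, true_and]
  constructor
  · rintro ⟨j, hj, hji⟩
    have : j = i := Fin.ext (by omega)
    rwa [this] at hj
  · exact fun h => ⟨i, h, rfl⟩

lemma keyCol_bounds {n : ℕ} {β : Fin n → ℕ} {c : ℕ} {x : ℕ} (hx : x ∈ keyCol n β c) :
    1 ≤ x ∧ x ≤ n := by
  simp only [keyCol, Finset.mem_image, Finset.mem_filter, Finset.mem_univ, true_and] at hx
  obtain ⟨j, _, rfl⟩ := hx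
  exact ⟨by omega, by omega⟩

lemma keyCol_card {n : ℕ} {β : Fin n → ℕ} {c : ℕ} :
    (keyCol n β c).card = (Finset.univ.filter fun i : Fin n => c < β i).card := by
  apply Finset.card_image_of_injective
  intro a b hab
  simp only at hab
  exact Fin.ext (by omega)

lemma keyCol_anti {n : ℕ} {β : Fin n → ℕ} {c1 c2 : ℕ} (h : c1 ≤ c2) :
    keyCol n β c2 ⊆ keyCol n β c1 := by
  intro x hx
  simp only [keyCol, Finset.mem_image, Finset.mem_filter, Finset.mem_univ, true_and] at hx ⊢
  obtain ⟨j, hj, rfl⟩ := hx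
  exact ⟨j, by omega, rfl⟩

/-- The `r`-th smallest element of a superset is at most the `r`-th smallest of the subset. -/
lemma sort_getD_anti {s t : Finset ℕ} (hst : s ⊆ t) {r : ℕ} (hr : r < s.card) :
    (t.sort (· ≤ ·)).getD r 0 ≤ (s.sort (· ≤ ·)).getD r 0 := by
  set ls := s.sort (· ≤ ·) with hls
  set lt := t.sort (· ≤ ·) with hlt
  have hlens : ls.length = s.card := Finset.length_sort _
  have hlent : lt.length = t.card := Finset.length_sort _
  have hrs : r < ls.length := by rw [hlens]; exact hr
  have hrt : r < lt.length := by
    rw [hlent]; exact lt_of_lt_of_le hr (Finset.card_le_card hst)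
  rw [List.getD_eq_getElem _ _ hrt, List.getD_eq_getElem _ _ hrs]
  by_contra hcon
  push_neg at hcon
  have hsub1 : t.filter (· ≤ ls[r]) ⊆ (Finset.range r).image (fun j => lt.getD j 0) := by
    intro x hx
    rw [Finset.mem_filter] at hx
    obtain ⟨hxt, hxb⟩ := hx
    obtain ⟨j, hj, hxj⟩ : ∃ j, ∃ h : j < lt.length, lt[j] = x :=
      List.mem_iff_getElem.1 ((Finset.mem_sort (· ≤ ·)).2 hxt)
    have hjr : j < r := by
      by_contra hjr
      push_neg at hjr
      have h1 : lt[r] ≤ lt[j] := by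
        rcases eq_or_lt_of_le hjr with h | h
        · exact le_of_eq (by congr 1)
        · exact le_of_lt ((t.sortedLT_sort).strictMono_get (a := ⟨r, hrt⟩) (b := ⟨j, hj⟩) h)
      omega
    exact Finset.mem_image.2 ⟨j, Finset.mem_range.2 hjr, by rw [List.getD_eq_getElem _ _ hj, hxj]⟩
  have hsub2 : (Finset.range (r + 1)).image (fun j => ls.getD j 0) ⊆ t.filter (· ≤ ls[r]) := by
    intro x hx
    obtain ⟨j, hj, rfl⟩ := Finset.mem_image.1 hx
    rw [Finset.mem_range] at hj
    have hjs : j < ls.length := by omega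
    rw [List.getD_eq_getElem _ _ hjs]
    refine Finset.mem_filter.2 ⟨hst ((Finset.mem_sort (· ≤ ·)).1 (ls.getElem_mem hjs)), ?_⟩
    rcases eq_or_lt_of_le (Nat.lt_succ_iff.1 hj) with h | h
    · exact le_of_eq (by congr 1)
    · exact le_of_lt ((s.sortedLT_sort).strictMono_get (a := ⟨j, hjs⟩) (b := ⟨r, hrs⟩) h)
  have hcard2 : ((Finset.range (r + 1)).image (fun j => ls.getD j 0)).card = r + 1 := by
    rw [Finset.card_image_of_injOn, Finset.card_range]
    intro a ha b hb hab
    simp only [Finset.coe_range, Set.mem_Iio] at ha hb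
    simp only at hab
    have ha' : a < ls.length := by omega
    have hb' : b < ls.length := by omega
    rw [List.getD_eq_getElem _ _ ha', List.getD_eq_getElem _ _ hb'] at hab
    rcases lt_trichotomy a b with h | h | h
    · exact absurd hab (ne_of_lt ((s.sortedLT_sort).strictMono_get (a := ⟨a, ha'⟩) (b := ⟨b, hb'⟩) h))
    · exact h
    · exact absurd hab.symm
        (ne_of_lt ((s.sortedLT_sort).strictMono_get (a := ⟨b, hb'⟩) (b := ⟨a, ha'⟩) h))
  have h1 := Finset.card_le_card hsub1
  have h2 := Finset.card_le_card hsub2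
  have h3 := Finset.card_image_le (s := Finset.range r) (f := fun j => lt.getD j 0)
  rw [Finset.card_range] at h3
  omega


lemma count_gt {α : Type*} [DecidableEq α] (A : Finset α) (u : α → ℕ) (c M : ℕ)
    (h : ∀ a ∈ A, u a < M) :
    (A.filter fun a => c < u a).card =
      ∑ m ∈ Finset.range M, (A.filter fun a => c < m ∧ u a = m).card := by
  rw [Finset.card_eq_sum_card_fiberwise
    (f := u) (t := Finset.range M)
    (fun a ha => Finset.mem_range.2 (h a (Finset.mem_filter.1 ha).1))]
  apply Finset.sum_congr rfl
  intro m _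
  congr 1
  rw [Finset.filter_filter]
  apply Finset.filter_congr
  intro a _
  constructor
  · rintro ⟨h1, h2⟩; exact ⟨h2 ▸ h1, h2⟩
  · rintro ⟨h1, h2⟩; exact ⟨h2 ▸ h1, h2⟩

lemma colLen_count (n : ℕ) (β : Fin n → ℕ) (μ : YoungDiagram)
    (hshape : ∀ m : ℕ, 0 < m →
      ((Finset.range (μ.card + 1)).filter fun i => μ.rowLen i = m).card =
        (Finset.univ.filter fun i : Fin n => β i = m).card)
    (c : ℕ) :
    μ.colLen c = (Finset.univ.filter fun i : Fin n => c < β i).card := by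
  have hrowbound : ∀ r : ℕ, μ.rowLen r ≤ μ.card := by
    intro r
    rw [YoungDiagram.rowLen_eq_card]
    exact Finset.card_le_card (Finset.filter_subset _ _)
  have hcolbound : ∀ j : ℕ, μ.colLen j ≤ μ.card := by
    intro j
    rw [YoungDiagram.colLen_eq_card]
    exact Finset.card_le_card (Finset.filter_subset _ _)
  have h1 : μ.colLen c = ((Finset.range (μ.card + 1)).filter fun r => c < μ.rowLen r).card := by
    have : ((Finset.range (μ.card + 1)).filter fun r => c < μ.rowLen r) =
        Finset.range (μ.colLen c) := by
      ext r
      simp only [Finset.mem_filter, Finset.mem_range]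
      constructor
      · rintro ⟨_, h2⟩
        rw [← YoungDiagram.mem_iff_lt_rowLen] at h2
        rwa [YoungDiagram.mem_iff_lt_colLen] at h2
      · intro hr
        have h2 : (r, c) ∈ μ := YoungDiagram.mem_iff_lt_colLen.2 hr
        refine ⟨?_, YoungDiagram.mem_iff_lt_rowLen.1 h2⟩
        have := hcolbound c
        omega
    rw [this, Finset.card_range]
  set M : ℕ := μ.card + 1 + ∑ i, β i with hM
  have hβbound : ∀ i : Fin n, β i < M := by
    intro i
    have : β i ≤ ∑ j, β j := Finset.single_le_sum (fun j _ => Nat.zero_le _) (Finset.mem_univ i)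
    omega
  rw [h1, count_gt _ _ _ M (fun r hr => by have := hrowbound r; have := Finset.mem_range.1 hr; omega),
    count_gt Finset.univ β c M (fun i _ => hβbound i)]
  apply Finset.sum_congr rfl
  intro m _
  by_cases hcm : c < m
  · have h0 : 0 < m := by omega
    have := hshape m h0
    simp only [hcm, true_and]
    exact this
  · simp only [hcm, false_and, Finset.filter_false, Finset.card_empty]


/-- In an SSYT of shape `β⁺` with weight `β`, the set of entries of column `c`
is exactly `keyCol n β c`. -/
lemma col_image_eq (n : ℕ) (β : Fin n → ℕ) (μ : YoungDiagram)
    (hcol : ∀ c, μ.colLen c = (Finset.univ.filter fun i : Fin n => c < β i).card)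
    (T : SemistandardYoungTableau μ)
    (hb : ∀ p ∈ μ.cells, 1 ≤ T p.1 p.2 ∧ T p.1 p.2 ≤ n)
    (hw : ∀ i : Fin n, (μ.cells.filter fun p => T p.1 p.2 = (i : ℕ) + 1).card = β i)
    (c : ℕ) :
    (Finset.range (μ.colLen c)).image (fun r => T r c) = keyCol n β c := by
  induction c using Nat.strong_induction_on with
  | _ c IH =>
  -- membership of each entry
  have hmem : ∀ r, r < μ.colLen c → T r c ∈ keyCol n β c := by
    intro r hr
    have hcell : (r, c) ∈ μ := YoungDiagram.mem_iff_lt_colLen.2 hr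
    have hcell' : (r, c) ∈ μ.cells := (YoungDiagram.mem_cells _).2 hcell
    obtain ⟨hb1, hb2⟩ := hb (r, c) hcell'
    dsimp only at hb1 hb2
    set i : Fin n := ⟨T r c - 1, by omega⟩ with hi
    have hival : (i : ℕ) + 1 = T r c := by simp [hi]; omega
    rw [← hival, mem_keyCol]
    by_contra hcon
    push_neg at hcon
    -- counting the occurrences of i+1
    set W := μ.cells.filter fun p => T p.1 p.2 = (i : ℕ) + 1 with hW
    set K := μ.card + c + 1 with hK
    have hWcolbound : ∀ p ∈ W, p.2 ∈ Finset.range K := by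
      intro p hp
      have hpμ : p ∈ μ := (YoungDiagram.mem_cells _).1 (Finset.mem_filter.1 hp).1
      have h0 : (0, p.2) ∈ μ := μ.up_left_mem (Nat.zero_le _) (le_refl _) hpμ
      have h1 : (0, p.2) ∈ μ.cells := (YoungDiagram.mem_cells _).2 h0
      have h2 : p.2 < μ.rowLen 0 := YoungDiagram.mem_iff_lt_rowLen.1 h0
      have h3 : μ.rowLen 0 ≤ μ.card := by
        rw [YoungDiagram.rowLen_eq_card]
        exact Finset.card_le_card (Finset.filter_subset _ _)
      rw [Finset.mem_range]; omega
    have hfib : W.card = ∑ b ∈ Finset.range K, (W.filter fun p => p.2 = b).card :=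
      Finset.card_eq_sum_card_fiberwise hWcolbound
    -- per-column counts
    set Q : ℕ → Finset ℕ := fun b =>
      (Finset.range (μ.colLen b)).filter fun r' => T r' b = (i : ℕ) + 1 with hQ
    have hcnteq : ∀ b, (W.filter fun p => p.2 = b) = (Q b).image (fun r' => (r', b)) := by
      intro b
      ext p
      obtain ⟨pa, pb⟩ := p
      simp only [hW, hQ, Finset.mem_filter, Finset.mem_image, Finset.mem_range,
        YoungDiagram.mem_cells, Prod.mk.injEq]
      constructor
      · rintro ⟨⟨h1, h2⟩, h3⟩
        subst h3
        exact ⟨pa, ⟨YoungDiagram.mem_iff_lt_colLen.1 h1, h2⟩, rfl, rfl⟩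
      · rintro ⟨a, ⟨ha1, ha2⟩, rfl, rfl⟩
        exact ⟨⟨YoungDiagram.mem_iff_lt_colLen.2 ha1, ha2⟩, rfl⟩
    have hcnt : ∀ b, (W.filter fun p => p.2 = b).card = (Q b).card := by
      intro b
      rw [hcnteq b]
      apply Finset.card_image_of_injective
      intro a a' h
      simpa using congrArg Prod.fst h
    have hQle : ∀ b, (Q b).card ≤ 1 := by
      intro b
      apply Finset.card_le_one.2
      intro a ha a' ha'
      simp only [hQ, Finset.mem_filter, Finset.mem_range] at ha ha'
      by_contra hne
      rcases lt_trichotomy a a' with h | h | h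
      · have := T.col_strict h (YoungDiagram.mem_iff_lt_colLen.2 ha'.1)
        omega
      · exact hne h
      · have := T.col_strict h (YoungDiagram.mem_iff_lt_colLen.2 ha.1)
        omega
    have hQsmall : ∀ b < c, (Q b).card = if b < β i then 1 else 0 := by
      intro b hbc
      by_cases hbi : b < β i
      · simp only [hbi, if_true]
        have himg := IH b hbc
        have : (i : ℕ) + 1 ∈ (Finset.range (μ.colLen b)).image (fun r' => T r' b) := by
          rw [himg, mem_keyCol]; exact hbi
        obtain ⟨r', hr', hr'2⟩ := Finset.mem_image.1 this
        have hne : (Q b).Nonempty := ⟨r', Finset.mem_filter.2 ⟨hr', hr'2⟩⟩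
        have := hQle b
        have := Finset.card_pos.2 hne
        omega
      · simp only [hbi, if_false]
        rw [Finset.card_eq_zero]
        by_contra hne
        obtain ⟨r', hr'⟩ := Finset.nonempty_iff_ne_empty.2 hne
        simp only [hQ, Finset.mem_filter, Finset.mem_range] at hr'
        have : (i : ℕ) + 1 ∈ (Finset.range (μ.colLen b)).image (fun r'' => T r'' b) :=
          Finset.mem_image.2 ⟨r', Finset.mem_range.2 hr'.1, hr'.2⟩
        rw [IH b hbc, mem_keyCol] at this
        omega
    -- assemble the contradiction
    have hsum1 : ∑ b ∈ Finset.range c, (Q b).card = β i := by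
      have : ∀ b ∈ Finset.range c, (Q b).card = if b < β i then 1 else 0 := by
        intro b hbc; exact hQsmall b (Finset.mem_range.1 hbc)
      rw [Finset.sum_congr rfl this, ← Finset.card_filter]
      have : (Finset.range c).filter (fun b => b < β i) = Finset.range (β i) := by
        ext b; simp only [Finset.mem_filter, Finset.mem_range]; omega
      rw [this, Finset.card_range]
    have hQc : 1 ≤ (Q c).card := by
      apply Finset.card_pos.2
      exact ⟨r, Finset.mem_filter.2 ⟨Finset.mem_range.2 hr, hival.symm⟩⟩
    have hck : c < K := by omega
    have hsplit : ∑ b ∈ Finset.range K, (W.filter fun p => p.2 = b).card ≥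
        (∑ b ∈ Finset.range c, (Q b).card) + (Q c).card := by
      calc ∑ b ∈ Finset.range K, (W.filter fun p => p.2 = b).card
          = ∑ b ∈ Finset.range K, (Q b).card := Finset.sum_congr rfl fun b _ => hcnt b
        _ ≥ ∑ b ∈ insert c (Finset.range c), (Q b).card := by
            apply Finset.sum_le_sum_of_subset
            intro b hbmem
            simp only [Finset.mem_insert, Finset.mem_range] at hbmem
            rw [Finset.mem_range]
            omega
        _ = (Q c).card + ∑ b ∈ Finset.range c, (Q b).card := by
            rw [Finset.sum_insert (by simp)]
        _ = (∑ b ∈ Finset.range c, (Q b).card) + (Q c).card := by ring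
    have hwi := hw i
    rw [← hW] at hwi
    omega
  -- now conclude the image equality
  have hsub : (Finset.range (μ.colLen c)).image (fun r => T r c) ⊆ keyCol n β c := by
    intro x hx
    obtain ⟨r, hr, rfl⟩ := Finset.mem_image.1 hx
    exact hmem r (Finset.mem_range.1 hr)
  have hcardimg : ((Finset.range (μ.colLen c)).image (fun r => T r c)).card = μ.colLen c := by
    rw [Finset.card_image_of_injOn, Finset.card_range]
    intro a ha b hb' hab
    simp only [Finset.coe_range, Set.mem_Iio] at ha hb'
    simp only at hab
    by_contra hne
    rcases lt_trichotomy a b with h | h | h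
    · have := T.col_strict h (YoungDiagram.mem_iff_lt_colLen.2 hb')
      omega
    · exact hne h
    · have := T.col_strict h (YoungDiagram.mem_iff_lt_colLen.2 ha)
      omega
  apply Finset.eq_of_subset_of_card_le hsub
  rw [hcardimg, keyCol_card, hcol c]


/-- Key tableaux: for a weight vector `β ∈ ℕⁿ` and `μ` the decreasing rearrangement `β⁺` of `β`
(expressed by saying the positive row lengths of `μ` are a rearrangement of the positive values
of `β`), there is exactly one semistandard tableau of shape `μ` with entries in `{1, …, n}` and
weight `β` — namely the key tableau `𝕂_β`. -/
theorem key_tableau_unique (n : ℕ) (β : Fin n → ℕ) (μ : YoungDiagram)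
    (hshape : ∀ m : ℕ, 0 < m →
      ((Finset.range (μ.card + 1)).filter fun i => μ.rowLen i = m).card =
        (Finset.univ.filter fun i : Fin n => β i = m).card) :
    ∃! T : SemistandardYoungTableau μ,
      (∀ c ∈ μ.cells, 1 ≤ T c.1 c.2 ∧ T c.1 c.2 ≤ n) ∧
        ∀ i : Fin n, (μ.cells.filter fun c => T c.1 c.2 = (i : ℕ) + 1).card = β i := by
  have hcol : ∀ c, μ.colLen c = (Finset.univ.filter fun i : Fin n => c < β i).card :=
    colLen_count n β μ hshape
  set L : ℕ → List ℕ := fun c => (keyCol n β c).sort (· ≤ ·) with hL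
  have hlen : ∀ c, (L c).length = μ.colLen c := by
    intro c
    rw [hL]
    simp only [Finset.length_sort]
    rw [keyCol_card, hcol]
  -- the key tableau
  set K : SemistandardYoungTableau μ :=
    { entry := fun r c => (L c).getD r 0
      row_weak' := by
        intro r j1 j2 hj hcell
        have hr2 : r < μ.colLen j2 := YoungDiagram.mem_iff_lt_colLen.1 hcell
        have hr2' : r < (keyCol n β j2).card := by
          have h := hlen j2
          rw [hL] at h
          simp only [Finset.length_sort] at h
          omega
        exact sort_getD_anti (keyCol_anti (le_of_lt hj)) hr2'
      col_strict' := by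
        intro i1 i2 j hi hcell
        have h2 : i2 < (L j).length := by rw [hlen]; exact YoungDiagram.mem_iff_lt_colLen.1 hcell
        have h1 : i1 < (L j).length := by omega
        show (L j).getD i1 0 < (L j).getD i2 0
        rw [List.getD_eq_getElem _ _ h1, List.getD_eq_getElem _ _ h2]
        exact ((keyCol n β j).sortedLT_sort).strictMono_get (a := ⟨i1, h1⟩) (b := ⟨i2, h2⟩) hi
      zeros' := by
        intro r c hcell
        apply List.getD_eq_default
        rw [hlen]
        rw [YoungDiagram.mem_iff_lt_colLen] at hcell
        omega } with hK
  have hKentry : ∀ r c, K r c = (L c).getD r 0 := fun r c => rfl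
  -- bounds
  have hKb : ∀ p ∈ μ.cells, 1 ≤ K p.1 p.2 ∧ K p.1 p.2 ≤ n := by
    intro p hp
    have hpμ : p ∈ μ := (YoungDiagram.mem_cells _).1 hp
    have hr : p.1 < (L p.2).length := by
      rw [hlen, ← YoungDiagram.mem_iff_lt_colLen]
      exact Prod.mk.eta ▸ hpμ
    rw [hKentry, List.getD_eq_getElem _ _ hr]
    exact keyCol_bounds ((Finset.mem_sort (· ≤ ·)).1 ((L p.2).getElem_mem hr))
  -- weight
  have hKw : ∀ i : Fin n, (μ.cells.filter fun p => K p.1 p.2 = (i : ℕ) + 1).card = β i := by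
    intro i
    rw [show β i = (Finset.range (β i)).card from (Finset.card_range _).symm]
    apply Finset.card_bij' (fun p _ => p.2)
      (fun c _ => ((L c).idxOf ((i : ℕ) + 1), c))
    · -- maps filter into range (β i)
      intro p hp
      rw [Finset.mem_filter] at hp
      obtain ⟨hp1, hp2⟩ := hp
      have hpμ : p ∈ μ := (YoungDiagram.mem_cells _).1 hp1
      have hr : p.1 < (L p.2).length := by
        rw [hlen, ← YoungDiagram.mem_iff_lt_colLen]
        exact Prod.mk.eta ▸ hpμ
      rw [hKentry, List.getD_eq_getElem _ _ hr] at hp2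
      have hmem : ((i : ℕ) + 1) ∈ keyCol n β p.2 := by
        rw [← hp2]
        exact (Finset.mem_sort (· ≤ ·)).1 ((L p.2).getElem_mem hr)
      rw [mem_keyCol] at hmem
      exact Finset.mem_range.2 hmem
    · -- inverse maps into filter
      intro c hc
      rw [Finset.mem_range] at hc
      have hmem : ((i : ℕ) + 1) ∈ keyCol n β c := mem_keyCol.2 hc
      have hmem' : ((i : ℕ) + 1) ∈ L c := (Finset.mem_sort (· ≤ ·)).2 hmem
      have hidx : (L c).idxOf ((i : ℕ) + 1) < (L c).length := List.idxOf_lt_length_iff.2 hmem'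
      rw [Finset.mem_filter]
      constructor
      · apply (YoungDiagram.mem_cells _).2
        apply YoungDiagram.mem_iff_lt_colLen.2
        rw [← hlen]; exact hidx
      · rw [hKentry]
        dsimp only
        rw [List.getD_eq_getElem _ _ hidx]
        exact List.getElem_idxOf hidx
    · -- left inverse
      intro p hp
      rw [Finset.mem_filter] at hp
      obtain ⟨hp1, hp2⟩ := hp
      have hpμ : p ∈ μ := (YoungDiagram.mem_cells _).1 hp1
      have hr : p.1 < (L p.2).length := by
        rw [hlen, ← YoungDiagram.mem_iff_lt_colLen]
        exact Prod.mk.eta ▸ hpμ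
      rw [hKentry, List.getD_eq_getElem _ _ hr] at hp2
      have hmem' : ((i : ℕ) + 1) ∈ L p.2 := by
        rw [← hp2]; exact (L p.2).getElem_mem hr
      have hidx : (L p.2).idxOf ((i : ℕ) + 1) < (L p.2).length :=
        List.idxOf_lt_length_iff.2 hmem'
      have : (L p.2)[(L p.2).idxOf ((i : ℕ) + 1)]'hidx = (L p.2)[p.1]'hr := by
        rw [List.getElem_idxOf hidx, hp2]
      have heq : (L p.2).idxOf ((i : ℕ) + 1) = p.1 :=
        ((Finset.sort_nodup _ _).getElem_inj_iff).1 this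
      exact Prod.ext heq rfl
    · -- right inverse
      intro c _
      rfl
  refine ⟨K, ⟨hKb, hKw⟩, ?_⟩
  -- uniqueness
  intro T ⟨hTb, hTw⟩
  ext r c
  by_cases hcell : (r, c) ∈ μ
  · have hr : r < μ.colLen c := YoungDiagram.mem_iff_lt_colLen.1 hcell
    have hcardS : (keyCol n β c).card = μ.colLen c := by rw [keyCol_card, hcol]
    have himg := col_image_eq n β μ hcol T hTb hTw c
    set f : Fin (μ.colLen c) → ℕ := fun j => T j c with hf
    have hfmono : StrictMono f := by
      intro a b hab
      exact T.col_strict hab (YoungDiagram.mem_iff_lt_colLen.2 b.2)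
    have hfmem : ∀ x, f x ∈ keyCol n β c := by
      intro x
      rw [← himg]
      exact Finset.mem_image.2 ⟨(x : ℕ), Finset.mem_range.2 x.2, rfl⟩
    have huniq := Finset.orderEmbOfFin_unique hcardS hfmem hfmono
    have h1 : T r c = f ⟨r, hr⟩ := rfl
    rw [h1, huniq]
    rw [Finset.orderEmbOfFin_apply]
    have hrL : r < (L c).length := by rw [hlen]; exact hr
    rw [hKentry, List.getD_eq_getElem _ _ hrL]
    simp only [hL, Fin.getElem_fin]
  · rw [T.zeros hcell, K.zeros hcell]
end
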